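/- arXiv:2403.08415 — 2 statements merged into one kernel-verified Lean document; each statement's English description precedes it below -/
import Mathlib

section
/- Assume the frequencies n₀ = lim_{k→∞} n₀(k)/k and n₁ = lim_{k→∞} n₁(k)/k exist. For every α ∈ ℝ, dim_H({x ∈ Σ_σ : λ_A(x) exists and equals α}) ≤ (1/(n₀·log 3 + n₁·log 4)) · inf_{q∈ℝ} { −qα + P_A(q) }. -/
open Set Filter

noncomputable section

/-- The digit set Ω₀. -/
def Dig0 : Finset (ℤ × ℤ) := {(0,0),(0,1),(0,2),(1,0),(1,2),(2,0),(2,1),(2,2)}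

/-- The digit set Ω₁. -/
def Dig1 : Finset (ℤ × ℤ) :=
  {(0,0),(0,1),(0,2),(0,3),(1,0),(1,3),(2,0),(2,1),(3,0),(3,1),(3,2),(3,3)}

/-- Ω indexed by a boolean (false = Ω₀, true = Ω₁). -/
def DigB : Bool → Finset (ℤ × ℤ)
  | false => Dig0
  | true => Dig1

/-- The contraction ratio denominator: 3 for the 0-system, 4 for the 1-system. -/
def ratioB : Bool → ℝ
  | false => 3
  | true => 4

/-- Maximal digit for the symbolic space: 2 when σ_i = 0, 3 when σ_i = 1. -/
def capB : Bool → ℕ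
  | false => 2
  | true => 3

/-- The maps Φ⁰_d (b = false) and Φ¹_d (b = true). -/
def Phi (b : Bool) (d : ℤ × ℤ) (p : ℝ × ℝ) : ℝ × ℝ :=
  ((p.1 + (d.1 : ℝ)) / ratioB b, (p.2 + (d.2 : ℝ)) / ratioB b)

/-- `cnt σ b k` = number of indices among the first k with σ-value b (i.e. n₀(k), n₁(k)). -/
def cnt (σ : ℕ → Bool) (b : Bool) (k : ℕ) : ℕ :=
  ((Finset.range k).filter (fun i => σ i = b)).card

/-- The scale 3^{n₀(k)}·4^{n₁(k)}. -/
def sc (σ : ℕ → Bool) (k : ℕ) : ℝ := 3 ^ cnt σ false k * 4 ^ cnt σ true k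

/-- The unit square F₀ = [0,1]². -/
def F0set : Set (ℝ × ℝ) := Set.Icc (0:ℝ) 1 ×ˢ Set.Icc (0:ℝ) 1

/-- The sets F_j of the Moran construction (σ j is the paper's σ_{j+1}). -/
def Fiter (σ : ℕ → Bool) : ℕ → Set (ℝ × ℝ)
  | 0 => F0set
  | j + 1 => ⋃ d ∈ DigB (σ j), Phi (σ j) d '' Fiter σ j

/-- The Sierpinski carpet with Moran structure F_σ = ⋂_{j ≥ 1} F_j. -/
def FMoran (σ : ℕ → Bool) : Set (ℝ × ℝ) := ⋂ j : ℕ, Fiter σ (j + 1)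

/-- The line L_a : y = (M/N)x + a. -/
def Lline (M N : ℕ) (a : ℝ) : Set (ℝ × ℝ) := {p | p.2 = (M : ℝ) / (N : ℝ) * p.1 + a}

/-- The interval J = [-M/N, 1]. -/
def Jset (M N : ℕ) : Set ℝ := Set.Icc (-(M : ℝ) / (N : ℝ)) 1

/-- The expanding maps T⁰_d (b = false) and T¹_d (b = true). -/
def Tmap (M N : ℕ) (b : Bool) (d : ℤ × ℤ) (x : ℝ) : ℝ :=
  ratioB b * x + (d.1 : ℝ) * ((M : ℝ) / (N : ℝ)) - (d.2 : ℝ)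

/-- The contracting maps S⁰_d (b = false) and S¹_d (b = true), inverses of T. -/
def Smap (M N : ℕ) (b : Bool) (d : ℤ × ℤ) (x : ℝ) : ℝ :=
  (x - (d.1 : ℝ) * ((M : ℝ) / (N : ℝ)) + (d.2 : ℝ)) / ratioB b

/-- Composition Φ^{σ₁…σ_n}_{d₁…d_n} = Φ^{σ₁}_{d₁} ∘ ⋯ ∘ Φ^{σ_n}_{d_n}. -/
def PhiComp (σ : ℕ → Bool) {n : ℕ} (w : Fin n → ℤ × ℤ) : ℝ × ℝ → ℝ × ℝ :=
  (List.ofFn (fun i : Fin n => Phi (σ i.1) (w i))).foldr (· ∘ ·) id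

/-- Composition S^{σ₁…σ_n}_{d₁…d_n} = S^{σ₁}_{d₁} ∘ ⋯ ∘ S^{σ_n}_{d_n}. -/
def Scomp (M N : ℕ) (σ : ℕ → Bool) {n : ℕ} (w : Fin n → ℤ × ℤ) : ℝ → ℝ :=
  (List.ofFn (fun i : Fin n => Smap M N (σ i.1) (w i))).foldr (· ∘ ·) id

/-- Composition T^{σ₁…σ_n}_{d₁…d_n} = T^{σ_n}_{d_n} ∘ ⋯ ∘ T^{σ₁}_{d₁}. -/
def Tcomp (M N : ℕ) (σ : ℕ → Bool) {n : ℕ} (w : Fin n → ℤ × ℤ) : ℝ → ℝ :=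
  (List.ofFn (fun i : Fin n => Tmap M N (σ i.1) (w i))).foldl (fun g f => f ∘ g) id

/-- N_n^σ(a): the number of admissible words of length n whose level-n square meets L_a. -/
def Ncount (M N : ℕ) (σ : ℕ → Bool) (n : ℕ) (a : ℝ) : ℕ :=
  Set.ncard {w : Fin n → ℤ × ℤ |
    (∀ i, w i ∈ DigB (σ i.1)) ∧ (PhiComp σ w '' F0set ∩ Lline M N a).Nonempty}

/-- Γ_x = {x + i/N : i ∈ ℤ} ∩ J. -/
def GammaSet (M N : ℕ) (x : ℝ) : Set ℝ :=
  {y | (∃ i : ℤ, y = x + (i : ℝ) / (N : ℝ)) ∧ y ∈ Jset M N}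

/-- The matrix A₀^j (1-based indices p, q correspond to the Fin values plus one). -/
def A0mat (M N : ℕ) (j : ℕ) : Matrix (Fin (N + M)) (Fin (N + M)) ℝ :=
  Matrix.of fun p q =>
    ((Dig0.filter (fun d => d.1 * (M : ℤ) - d.2 * (N : ℤ) =
        2 * (M : ℤ) + 2 + ((q : ℕ) + 1 : ℤ) - 3 * ((p : ℕ) + 1 : ℤ) - (j : ℤ))).card : ℝ)

/-- The matrix A₁^j. -/
def A1mat (M N : ℕ) (j : ℕ) : Matrix (Fin (N + M)) (Fin (N + M)) ℝ :=
  Matrix.of fun p q =>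
    ((Dig1.filter (fun d => d.1 * (M : ℤ) - d.2 * (N : ℤ) =
        3 * (M : ℤ) + 3 + ((q : ℕ) + 1 : ℤ) - 4 * ((p : ℕ) + 1 : ℤ) - (j : ℤ))).card : ℝ)

/-- A^j_b : A₀^j when b = false, A₁^j when b = true. -/
def Amat (M N : ℕ) : Bool → ℕ → Matrix (Fin (N + M)) (Fin (N + M)) ℝ
  | false => A0mat M N
  | true => A1mat M N

/-- The ordered matrix product A^{ξ₁}_{σ₁} A^{ξ₂}_{σ₂} ⋯ A^{ξ_k}_{σ_k}. -/
def Aprod (M N : ℕ) (σ : ℕ → Bool) (ξ : ℕ → ℕ) (k : ℕ) :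
    Matrix (Fin (N + M)) (Fin (N + M)) ℝ :=
  ((List.range k).map (fun i => Amat M N (σ i) (ξ i))).prod

/-- The matrix B_b(x), built from a chosen increasing enumeration Γe of the sets Γ_x. -/
def Bmat (M N : ℕ) (Γe : ℝ → Fin (N + M) → ℝ) (b : Bool) (x : ℝ) :
    Matrix (Fin (N + M)) (Fin (N + M)) ℝ :=
  Matrix.of fun p q =>
    (Set.ncard {d : ℤ × ℤ | d ∈ DigB b ∧ Tmap M N b d (Γe x p) = Γe (ratioB b * x) q} : ℝ)

/-- ‖X‖: the sum of all entries of a matrix. -/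
def mnorm {n : ℕ} (X : Matrix (Fin n) (Fin n) ℝ) : ℝ := ∑ p, ∑ q, X p q

/-- The least number of sets of diameter at most δ needed to cover E. -/
def coverNum (E : Set (ℝ × ℝ)) (δ : ℝ) : ℕ :=
  sInf {n : ℕ | ∃ S : Finset (Set (ℝ × ℝ)), S.card = n ∧
    (∀ s ∈ S, EMetric.diam s ≤ ENNReal.ofReal δ) ∧ E ⊆ ⋃ s ∈ S, s}

/-- The upper box dimension. -/
def uboxDim (E : Set (ℝ × ℝ)) : ℝ :=
  limsup (fun δ : ℝ => Real.log (coverNum E δ : ℝ) / (-Real.log δ))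
    (nhdsWithin (0 : ℝ) (Set.Ioi 0))

/-- The lower box dimension. -/
def lboxDim (E : Set (ℝ × ℝ)) : ℝ :=
  liminf (fun δ : ℝ => Real.log (coverNum E δ : ℝ) / (-Real.log δ))
    (nhdsWithin (0 : ℝ) (Set.Ioi 0))

/-- The finite words Σ_σ^k. -/
def wordsF (σ : ℕ → Bool) (k : ℕ) : Finset (Fin k → ℕ) :=
  Fintype.piFinset fun i => Finset.range (capB (σ i.1) + 1)

/-- A_ω for a finite word ω ∈ Σ_σ^k. -/
def AprodW (M N : ℕ) (σ : ℕ → Bool) {k : ℕ} (ω : Fin k → ℕ) :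
    Matrix (Fin (N + M)) (Fin (N + M)) ℝ :=
  (List.ofFn (fun i : Fin k => Amat M N (σ i.1) (ω i))).prod

/-- The pressure function P_A(q). -/
def PA (M N : ℕ) (σ : ℕ → Bool) (q : ℝ) : ℝ :=
  limsup (fun k : ℕ =>
    Real.log (∑ ω ∈ wordsF σ k, mnorm (AprodW M N σ ω) ^ q) / (k : ℝ)) atTop

/-- The level set E(α) of intercepts whose box-dimension limit equals α. -/
def Eset (M N : ℕ) (σ : ℕ → Bool) (α : ℝ) : Set ℝ :=
  {a | a ∈ Jset M N ∧ (∀ k : ℕ, ¬∃ m : ℤ, sc σ k * (N : ℝ) * a = (m : ℝ)) ∧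
    ∃ κ : ℕ, (1 ≤ κ ∧ κ ≤ N + M) ∧ ∃ ξ : ℕ → ℕ, (∀ i, ξ i ≤ capB (σ i)) ∧
      a = (-(M : ℝ) - 1 + (κ : ℝ)) / (N : ℝ) +
          1 / (N : ℝ) * ∑' i : ℕ, (ξ i : ℝ) / sc σ (i + 1) ∧
      Tendsto (fun k : ℕ => Real.log (mnorm (Aprod M N σ ξ k)) /
        ((cnt σ false k : ℝ) * Real.log 3 + (cnt σ true k : ℝ) * Real.log 4))
        atTop (nhds α)}

namespace S16

open MeasureTheory

lemma capB_le (b : Bool) : capB b ≤ 3 := by cases b <;> simp [capB]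

lemma mnorm_nonneg {n : ℕ} {X : Matrix (Fin n) (Fin n) ℝ} (h : ∀ p q, 0 ≤ X p q) :
    0 ≤ mnorm X :=
  Finset.sum_nonneg fun p _ => Finset.sum_nonneg fun q _ => h p q

lemma mnorm_mul_le {n : ℕ} {X Y : Matrix (Fin n) (Fin n) ℝ} (hX : ∀ p q, 0 ≤ X p q)
    (hY : ∀ p q, 0 ≤ Y p q) : mnorm (X * Y) ≤ mnorm X * mnorm Y := by
  have h1 : mnorm (X * Y) = ∑ r, (∑ p, X p r) * (∑ q, Y r q) := by
    simp only [mnorm, Matrix.mul_apply]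
    calc ∑ p, ∑ q, ∑ r, X p r * Y r q
        = ∑ p, ∑ r, ∑ q, X p r * Y r q := by
          exact Finset.sum_congr rfl fun p _ => Finset.sum_comm
      _ = ∑ p, ∑ r, X p r * ∑ q, Y r q := by
          refine Finset.sum_congr rfl fun p _ => Finset.sum_congr rfl fun r _ => ?_
          rw [Finset.mul_sum]
      _ = ∑ r, ∑ p, X p r * ∑ q, Y r q := Finset.sum_comm
      _ = ∑ r, (∑ p, X p r) * ∑ q, Y r q := by
          refine Finset.sum_congr rfl fun r _ => ?_
          rw [Finset.sum_mul]
  rw [h1]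
  have h2 : ∀ r : Fin n, (∑ q, Y r q) ≤ mnorm Y := fun r =>
    Finset.single_le_sum (f := fun p => ∑ q, Y p q)
      (fun p _ => Finset.sum_nonneg fun q _ => hY p q) (Finset.mem_univ r)
  calc ∑ r, (∑ p, X p r) * ∑ q, Y r q
      ≤ ∑ r, (∑ p, X p r) * mnorm Y := by
        refine Finset.sum_le_sum fun r _ => ?_
        exact mul_le_mul_of_nonneg_left (h2 r) (Finset.sum_nonneg fun p _ => hX p r)
    _ = (∑ r, ∑ p, X p r) * mnorm Y := by rw [Finset.sum_mul]
    _ = mnorm X * mnorm Y := by rw [Finset.sum_comm]; rfl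

lemma amat_nonneg (M N : ℕ) (b : Bool) (j : ℕ) (p q : Fin (N + M)) :
    0 ≤ Amat M N b j p q := by
  cases b <;> simp only [Amat, A0mat, A1mat, Matrix.of_apply] <;> positivity

lemma amat_entry_le (M N : ℕ) (b : Bool) (j : ℕ) (p q : Fin (N + M)) :
    Amat M N b j p q ≤ 12 := by
  have h0 : Dig0.card = 8 := by decide
  have h1 : Dig1.card = 12 := by decide
  cases b
  · simp only [Amat, A0mat, Matrix.of_apply]
    calc ((Dig0.filter _).card : ℝ) ≤ (Dig0.card : ℝ) := by
          exact Nat.cast_le.mpr (Finset.card_filter_le _ _)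
      _ ≤ 12 := by rw [h0]; norm_num
  · simp only [Amat, A1mat, Matrix.of_apply]
    calc ((Dig1.filter _).card : ℝ) ≤ (Dig1.card : ℝ) := by
          exact Nat.cast_le.mpr (Finset.card_filter_le _ _)
      _ ≤ 12 := by rw [h1]; norm_num

lemma window0 (M N L : ℤ) (hM : 0 ≤ M) (hN : 1 ≤ N) (h1 : L ≤ 2*M) (h2 : -2*N ≤ L+N+M-1) :
    ∃ d : ℤ × ℤ, d ∈ Dig0 ∧ L ≤ d.1*M - d.2*N ∧ d.1*M - d.2*N ≤ L+N+M-1 := by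
  have h : (L ≤ 2*M ∧ 2*M ≤ L+N+M-1) ∨ (L ≤ M ∧ M ≤ L+N+M-1) ∨ (L ≤ 0 ∧ 0 ≤ L+N+M-1)
      ∨ (L ≤ -N ∧ -N ≤ L+N+M-1) ∨ (L ≤ -2*N ∧ -2*N ≤ L+N+M-1) := by omega
  rcases h with h|h|h|h|h
  · exact ⟨(2,0), by decide, by push_cast; linarith [h.1], by push_cast; linarith [h.2]⟩
  · exact ⟨(1,0), by decide, by push_cast; linarith [h.1], by push_cast; linarith [h.2]⟩
  · exact ⟨(0,0), by decide, by push_cast; linarith [h.1], by push_cast; linarith [h.2]⟩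
  · exact ⟨(0,1), by decide, by push_cast; linarith [h.1], by push_cast; linarith [h.2]⟩
  · exact ⟨(0,2), by decide, by push_cast; linarith [h.1], by push_cast; linarith [h.2]⟩

lemma window1 (M N L : ℤ) (hM : 0 ≤ M) (hN : 1 ≤ N) (h1 : L ≤ 3*M) (h2 : -3*N ≤ L+N+M-1) :
    ∃ d : ℤ × ℤ, d ∈ Dig1 ∧ L ≤ d.1*M - d.2*N ∧ d.1*M - d.2*N ≤ L+N+M-1 := by
  have h : (L ≤ 3*M ∧ 3*M ≤ L+N+M-1) ∨ (L ≤ 2*M ∧ 2*M ≤ L+N+M-1)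
      ∨ (L ≤ M ∧ M ≤ L+N+M-1) ∨ (L ≤ 0 ∧ 0 ≤ L+N+M-1)
      ∨ (L ≤ -N ∧ -N ≤ L+N+M-1) ∨ (L ≤ -2*N ∧ -2*N ≤ L+N+M-1)
      ∨ (L ≤ -3*N ∧ -3*N ≤ L+N+M-1) := by omega
  rcases h with h|h|h|h|h|h|h
  · exact ⟨(3,0), by decide, by push_cast; linarith [h.1], by push_cast; linarith [h.2]⟩
  · exact ⟨(2,0), by decide, by push_cast; linarith [h.1], by push_cast; linarith [h.2]⟩
  · exact ⟨(1,0), by decide, by push_cast; linarith [h.1], by push_cast; linarith [h.2]⟩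
  · exact ⟨(0,0), by decide, by push_cast; linarith [h.1], by push_cast; linarith [h.2]⟩
  · exact ⟨(0,1), by decide, by push_cast; linarith [h.1], by push_cast; linarith [h.2]⟩
  · exact ⟨(0,2), by decide, by push_cast; linarith [h.1], by push_cast; linarith [h.2]⟩
  · exact ⟨(0,3), by decide, by push_cast; linarith [h.1], by push_cast; linarith [h.2]⟩

lemma exists_entry_pos (M N : ℕ) (hN : 1 ≤ N) (b : Bool) (j : ℕ) (hj : j ≤ capB b)
    (p : Fin (N + M)) : ∃ q : Fin (N + M), (1 : ℝ) ≤ Amat M N b j p q := by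
  have hp1 : (p : ℕ) < N + M := p.2
  cases b
  · -- Ω₀ case
    obtain ⟨d, hd, hL, hU⟩ := window0 M N (2*(M:ℤ)+3-3*((p:ℕ)+1)-(j:ℤ))
      (by positivity) (by exact_mod_cast hN)
      (by simp only [capB] at hj; push_cast; omega)
      (by simp only [capB] at hj; push_cast; omega)
    set v : ℤ := d.1*(M:ℤ) - d.2*(N:ℤ) with hv
    have ht : (v - (2*(M:ℤ)+3-3*((p:ℕ)+1)-(j:ℤ))).toNat < N + M := by omega
    refine ⟨⟨(v - (2*(M:ℤ)+3-3*((p:ℕ)+1)-(j:ℤ))).toNat, ht⟩, ?_⟩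
    simp only [Amat, A0mat, Matrix.of_apply]
    have hmem : d ∈ Dig0.filter (fun d => d.1 * (M:ℤ) - d.2 * (N:ℤ) =
        2 * (M:ℤ) + 2 + (((v - (2*(M:ℤ)+3-3*((p:ℕ)+1)-(j:ℤ))).toNat : ℕ) + 1 : ℤ)
          - 3 * ((p:ℕ) + 1 : ℤ) - (j:ℤ)) := by
      rw [Finset.mem_filter]
      refine ⟨hd, ?_⟩
      push_cast
      omega
    have : 1 ≤ (Dig0.filter _).card := Finset.card_pos.mpr ⟨d, hmem⟩
    exact_mod_cast Nat.one_le_cast.mpr this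
  · -- Ω₁ case
    obtain ⟨d, hd, hL, hU⟩ := window1 M N (3*(M:ℤ)+4-4*((p:ℕ)+1)-(j:ℤ))
      (by positivity) (by exact_mod_cast hN)
      (by simp only [capB] at hj; push_cast; omega)
      (by simp only [capB] at hj; push_cast; omega)
    set v : ℤ := d.1*(M:ℤ) - d.2*(N:ℤ) with hv
    have ht : (v - (3*(M:ℤ)+4-4*((p:ℕ)+1)-(j:ℤ))).toNat < N + M := by omega
    refine ⟨⟨(v - (3*(M:ℤ)+4-4*((p:ℕ)+1)-(j:ℤ))).toNat, ht⟩, ?_⟩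
    simp only [Amat, A1mat, Matrix.of_apply]
    have hmem : d ∈ Dig1.filter (fun d => d.1 * (M:ℤ) - d.2 * (N:ℤ) =
        3 * (M:ℤ) + 3 + (((v - (3*(M:ℤ)+4-4*((p:ℕ)+1)-(j:ℤ))).toNat : ℕ) + 1 : ℤ)
          - 4 * ((p:ℕ) + 1 : ℤ) - (j:ℤ)) := by
      rw [Finset.mem_filter]
      refine ⟨hd, ?_⟩
      push_cast
      omega
    have : 1 ≤ (Dig1.filter _).card := Finset.card_pos.mpr ⟨d, hmem⟩
    exact_mod_cast Nat.one_le_cast.mpr this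

lemma one_le_rowsum_amat (M N : ℕ) (hN : 1 ≤ N) (b : Bool) (j : ℕ) (hj : j ≤ capB b)
    (p : Fin (N + M)) : (1 : ℝ) ≤ ∑ q, Amat M N b j p q := by
  obtain ⟨q, hq⟩ := exists_entry_pos M N hN b j hj p
  calc (1:ℝ) ≤ Amat M N b j p q := hq
    _ ≤ ∑ q', Amat M N b j p q' :=
      Finset.single_le_sum (fun q' _ => amat_nonneg M N b j p q') (Finset.mem_univ q)

lemma aprod_succ (M N : ℕ) (σ : ℕ → Bool) (ξ : ℕ → ℕ) (k : ℕ) :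
    Aprod M N σ ξ (k+1) = Aprod M N σ ξ k * Amat M N (σ k) (ξ k) := by
  simp [Aprod, List.range_succ]

lemma aprod_nonneg (M N : ℕ) (σ : ℕ → Bool) (ξ : ℕ → ℕ) (k : ℕ) (p q : Fin (N + M)) :
    0 ≤ Aprod M N σ ξ k p q := by
  induction k generalizing p q with
  | zero =>
    simp only [Aprod, List.range_zero, List.map_nil, List.prod_nil, Matrix.one_apply]
    split <;> norm_num
  | succ k ih =>
    rw [aprod_succ]
    rw [Matrix.mul_apply]
    exact Finset.sum_nonneg fun r _ => mul_nonneg (ih p r) (amat_nonneg M N (σ k) (ξ k) r q)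

lemma one_le_rowsum_aprod (M N : ℕ) (hN : 1 ≤ N) (σ : ℕ → Bool) (ξ : ℕ → ℕ)
    (hξ : ∀ i, ξ i ≤ capB (σ i)) (k : ℕ) (p : Fin (N + M)) :
    (1 : ℝ) ≤ ∑ q, Aprod M N σ ξ k p q := by
  induction k generalizing p with
  | zero =>
    simp only [Aprod, List.range_zero, List.map_nil, List.prod_nil, Matrix.one_apply]
    simp
  | succ k ih =>
    rw [aprod_succ]
    have : ∑ q, (Aprod M N σ ξ k * Amat M N (σ k) (ξ k)) p q
        = ∑ r, Aprod M N σ ξ k p r * ∑ q, Amat M N (σ k) (ξ k) r q := by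
      simp only [Matrix.mul_apply]
      rw [Finset.sum_comm]
      exact Finset.sum_congr rfl fun r _ => (Finset.mul_sum _ _ _).symm
    rw [this]
    calc (1:ℝ) ≤ ∑ r, Aprod M N σ ξ k p r := ih p
      _ ≤ ∑ r, Aprod M N σ ξ k p r * ∑ q, Amat M N (σ k) (ξ k) r q := by
        refine Finset.sum_le_sum fun r _ => ?_
        nth_rewrite 1 [← mul_one (Aprod M N σ ξ k p r)]
        exact mul_le_mul_of_nonneg_left (one_le_rowsum_amat M N hN (σ k) (ξ k) (hξ k) r)
          (aprod_nonneg M N σ ξ k p r)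

lemma one_le_mnorm_aprod (M N : ℕ) (hN : 1 ≤ N) (σ : ℕ → Bool) (ξ : ℕ → ℕ)
    (hξ : ∀ i, ξ i ≤ capB (σ i)) (k : ℕ) : (1 : ℝ) ≤ mnorm (Aprod M N σ ξ k) := by
  have h : (1:ℝ) ≤ (N + M : ℝ) := by
    have : 1 ≤ N + M := le_trans hN (Nat.le_add_right N M)
    exact_mod_cast this
  calc (1:ℝ) ≤ (N + M : ℝ) := h
    _ = ∑ _p : Fin (N+M), (1:ℝ) := by simp
    _ ≤ ∑ p, ∑ q, Aprod M N σ ξ k p q :=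
      Finset.sum_le_sum fun p _ => one_le_rowsum_aprod M N hN σ ξ hξ k p

lemma mnorm_amat_le (M N : ℕ) (b : Bool) (j : ℕ) :
    mnorm (Amat M N b j) ≤ 12 * (N+M)^2 := by
  calc mnorm (Amat M N b j) ≤ ∑ _p : Fin (N+M), ∑ _q : Fin (N+M), (12:ℝ) :=
      Finset.sum_le_sum fun p _ => Finset.sum_le_sum fun q _ => amat_entry_le M N b j p q
    _ = 12 * (N+M)^2 := by simp; ring

lemma mnorm_aprod_le (M N : ℕ) (σ : ℕ → Bool) (ξ : ℕ → ℕ) (k : ℕ) :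
    mnorm (Aprod M N σ ξ k) ≤ (N+M) * (12 * (N+M)^2)^k := by
  induction k with
  | zero =>
    simp only [Aprod, List.range_zero, List.map_nil, List.prod_nil, pow_zero, mul_one]
    apply le_of_eq
    simp [mnorm, Matrix.one_apply]
  | succ k ih =>
    rw [aprod_succ]
    calc mnorm (Aprod M N σ ξ k * Amat M N (σ k) (ξ k))
        ≤ mnorm (Aprod M N σ ξ k) * mnorm (Amat M N (σ k) (ξ k)) :=
          mnorm_mul_le (aprod_nonneg M N σ ξ k) (amat_nonneg M N (σ k) (ξ k))
      _ ≤ ((N+M) * (12 * (N+M)^2)^k) * (12 * (N+M)^2) := by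
          apply mul_le_mul ih (mnorm_amat_le M N (σ k) (ξ k))
            (mnorm_nonneg (amat_nonneg M N (σ k) (ξ k)))
          positivity
      _ = (N+M) * (12 * (N+M)^2)^(k+1) := by ring

lemma aprodW_eq_aprod (M N : ℕ) (σ : ℕ → Bool) (ξ : ℕ → ℕ) (k : ℕ) :
    AprodW M N σ (fun i : Fin k => ξ i.1) = Aprod M N σ ξ k := by
  induction k with
  | zero => simp [AprodW, Aprod]
  | succ k ih =>
    rw [aprod_succ, ← ih, AprodW, AprodW, List.ofFn_succ']
    simp only [Fin.coe_castSucc, Fin.val_last, List.concat_eq_append, List.prod_append,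
      List.prod_cons, List.prod_nil, mul_one]

lemma cnt_add (σ : ℕ → Bool) (k : ℕ) : cnt σ false k + cnt σ true k = k := by
  classical
  have h : Finset.filter (fun i => σ i = true) (Finset.range k)
      = Finset.filter (fun i => ¬ (σ i = false)) (Finset.range k) := by
    apply Finset.filter_congr
    intro i _
    cases σ i <;> simp
  rw [cnt, cnt, h, Finset.card_filter_add_card_filter_not, Finset.card_range]

lemma cnt_mono (σ : ℕ → Bool) (b : Bool) {k l : ℕ} (h : k ≤ l) : cnt σ b k ≤ cnt σ b l :=
  Finset.card_le_card (Finset.filter_subset_filter _ (Finset.range_subset_range.mpr h))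

lemma sc_pos (σ : ℕ → Bool) (k : ℕ) : 0 < sc σ k := by
  unfold sc; positivity

lemma sc_mono (σ : ℕ → Bool) {k l : ℕ} (h : k ≤ l) : sc σ k ≤ sc σ l := by
  unfold sc
  have h3 : (3:ℝ) ^ cnt σ false k ≤ 3 ^ cnt σ false l :=
    pow_le_pow_right₀ (by norm_num) (cnt_mono σ false h)
  have h4 : (4:ℝ) ^ cnt σ true k ≤ 4 ^ cnt σ true l :=
    pow_le_pow_right₀ (by norm_num) (cnt_mono σ true h)
  have := mul_le_mul h3 h4 (by positivity) (by positivity)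
  linarith

lemma three_pow_le_sc (σ : ℕ → Bool) (k : ℕ) : (3:ℝ)^k ≤ sc σ k := by
  unfold sc
  calc (3:ℝ)^k = 3 ^ (cnt σ false k + cnt σ true k) := by rw [cnt_add]
    _ = 3 ^ cnt σ false k * 3 ^ cnt σ true k := pow_add 3 _ _
    _ ≤ 3 ^ cnt σ false k * 4 ^ cnt σ true k := by
        have : (3:ℝ) ^ cnt σ true k ≤ 4 ^ cnt σ true k :=
          pow_le_pow_left₀ (by norm_num) (by norm_num) _
        have h3 : (0:ℝ) < 3 ^ cnt σ false k := by positivity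
        nlinarith

lemma log_sc (σ : ℕ → Bool) (k : ℕ) :
    Real.log (sc σ k) = (cnt σ false k : ℝ) * Real.log 3 + (cnt σ true k : ℝ) * Real.log 4 := by
  unfold sc
  rw [Real.log_mul (by positivity) (by positivity), Real.log_pow, Real.log_pow]

/-- extension of a finite word to ℕ → ℕ -/
def extW {k : ℕ} (ω : Fin k → ℕ) : ℕ → ℕ := fun i => if h : i < k then ω ⟨i, h⟩ else 0

lemma aprodW_eq_ext (M N : ℕ) (σ : ℕ → Bool) {k : ℕ} (ω : Fin k → ℕ) :
    AprodW M N σ ω = Aprod M N σ (extW ω) k := by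
  rw [← aprodW_eq_aprod]
  congr 1
  funext i
  simp [extW, i.2]

lemma extW_le {σ : ℕ → Bool} {k : ℕ} {ω : Fin k → ℕ} (h : ∀ i : Fin k, ω i ≤ capB (σ i.1)) :
    ∀ i, extW ω i ≤ capB (σ i) := by
  intro i
  unfold extW
  split
  · exact h ⟨i, by assumption⟩
  · exact Nat.zero_le _

lemma mem_wordsF {σ : ℕ → Bool} {k : ℕ} {ω : Fin k → ℕ} :
    ω ∈ wordsF σ k ↔ ∀ i : Fin k, ω i ≤ capB (σ i.1) := by
  simp [wordsF, Fintype.mem_piFinset, Nat.lt_succ_iff]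

lemma one_le_mnorm_aprodW (M N : ℕ) (hN : 1 ≤ N) (σ : ℕ → Bool) {k : ℕ} {ω : Fin k → ℕ}
    (hω : ω ∈ wordsF σ k) : (1:ℝ) ≤ mnorm (AprodW M N σ ω) := by
  rw [aprodW_eq_ext]
  exact one_le_mnorm_aprod M N hN σ _ (extW_le (mem_wordsF.mp hω)) k

lemma mnorm_aprodW_le (M N : ℕ) (σ : ℕ → Bool) {k : ℕ} (ω : Fin k → ℕ) :
    mnorm (AprodW M N σ ω) ≤ (N+M) * (12 * (N+M)^2)^k := by
  rw [aprodW_eq_ext]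
  exact mnorm_aprod_le M N σ _ k

lemma wordsF_nonempty (σ : ℕ → Bool) (k : ℕ) : (wordsF σ k).Nonempty :=
  ⟨fun _ => 0, mem_wordsF.mpr fun _ => Nat.zero_le _⟩

lemma wordsF_card_le (σ : ℕ → Bool) (k : ℕ) : (wordsF σ k).card ≤ 4^k := by
  rw [wordsF, Fintype.card_piFinset]
  calc ∏ i : Fin k, (Finset.range (capB (σ i.1) + 1)).card
      ≤ ∏ _i : Fin k, 4 := by
        refine Finset.prod_le_prod (fun _ _ => Nat.zero_le _) fun i _ => ?_
        rw [Finset.card_range]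
        have := capB_le (σ i.1)
        omega
    _ = 4^k := by simp

lemma sum_pow_pos (M N : ℕ) (hN : 1 ≤ N) (σ : ℕ → Bool) (k : ℕ) (q : ℝ) :
    0 < ∑ ω ∈ wordsF σ k, mnorm (AprodW M N σ ω) ^ q :=
  Finset.sum_pos (fun ω hω => Real.rpow_pos_of_pos
    (lt_of_lt_of_le one_pos (one_le_mnorm_aprodW M N hN σ hω)) q) (wordsF_nonempty σ k)

lemma pressure_eventually (M N : ℕ) (hN : 1 ≤ N) (σ : ℕ → Bool) (q ε : ℝ) (hε : 0 < ε) :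
    ∀ᶠ k : ℕ in atTop,
      ∑ ω ∈ wordsF σ k, mnorm (AprodW M N σ ω) ^ q ≤ Real.exp (k * (PA M N σ q + ε)) := by
  set u : ℕ → ℝ := fun k =>
    Real.log (∑ ω ∈ wordsF σ k, mnorm (AprodW M N σ ω) ^ q) / (k : ℝ) with hu
  set D : ℝ := (N+M) * (12 * (N+M)^2) with hD
  have hNM : (1:ℝ) ≤ (N+M:ℝ) := by
    have : 1 ≤ N + M := le_trans hN (Nat.le_add_right N M)
    exact_mod_cast this
  have hD1 : (1:ℝ) ≤ D := by nlinarith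
  have hbd : ∀ k : ℕ, 1 ≤ k → u k ≤ Real.log 4 + |q| * Real.log D := by
    intro k hk
    have hkR : (0:ℝ) < k := by exact_mod_cast hk
    have hDk : (1:ℝ) ≤ D^k := one_le_pow₀ hD1
    have hterm : ∀ ω ∈ wordsF σ k, mnorm (AprodW M N σ ω) ^ q ≤ (D^k) ^ |q| := by
      intro ω hω
      have h1 : (1:ℝ) ≤ mnorm (AprodW M N σ ω) := one_le_mnorm_aprodW M N hN σ hω
      have h2 : mnorm (AprodW M N σ ω) ≤ D^k := by
        calc mnorm (AprodW M N σ ω) ≤ (N+M) * (12 * (N+M)^2)^k := mnorm_aprodW_le M N σ ω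
          _ ≤ (N+M)^k * (12 * (N+M)^2)^k := by
              have : (N+M:ℝ) ≤ (N+M:ℝ)^k := le_self_pow₀ hNM (by omega)
              have hpos : (0:ℝ) < (12 * ((N:ℝ)+M)^2)^k := by positivity
              nlinarith
          _ = D^k := by simp only [hD, mul_pow]
      calc mnorm (AprodW M N σ ω) ^ q ≤ mnorm (AprodW M N σ ω) ^ |q| :=
            Real.rpow_le_rpow_of_exponent_le h1 (le_abs_self q)
        _ ≤ (D^k) ^ |q| := Real.rpow_le_rpow (by linarith) h2 (abs_nonneg q)
    have hsum : ∑ ω ∈ wordsF σ k, mnorm (AprodW M N σ ω) ^ q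
        ≤ (4:ℝ)^k * (D^k) ^ |q| := by
      calc ∑ ω ∈ wordsF σ k, mnorm (AprodW M N σ ω) ^ q
          ≤ ∑ _ω ∈ wordsF σ k, (D^k) ^ |q| := Finset.sum_le_sum hterm
        _ = (wordsF σ k).card * (D^k) ^ |q| := by rw [Finset.sum_const, nsmul_eq_mul]
        _ ≤ (4:ℝ)^k * (D^k) ^ |q| := by
            have hc : ((wordsF σ k).card : ℝ) ≤ (4:ℝ)^k := by
              exact_mod_cast wordsF_card_le σ k
            have : (0:ℝ) ≤ (D^k) ^ |q| := Real.rpow_nonneg (by positivity) _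
            nlinarith
    have hlog : Real.log (∑ ω ∈ wordsF σ k, mnorm (AprodW M N σ ω) ^ q)
        ≤ k * Real.log 4 + |q| * (k * Real.log D) := by
      calc Real.log (∑ ω ∈ wordsF σ k, mnorm (AprodW M N σ ω) ^ q)
          ≤ Real.log ((4:ℝ)^k * (D^k) ^ |q|) :=
            Real.log_le_log (sum_pow_pos M N hN σ k q) hsum
        _ = k * Real.log 4 + |q| * (k * Real.log D) := by
            rw [Real.log_mul (by positivity) (ne_of_gt (Real.rpow_pos_of_pos (by positivity) _))]
            rw [Real.log_pow, Real.log_rpow (by positivity), Real.log_pow]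
    rw [hu]
    rw [div_le_iff₀ hkR]
    calc Real.log (∑ ω ∈ wordsF σ k, mnorm (AprodW M N σ ω) ^ q)
        ≤ k * Real.log 4 + |q| * (k * Real.log D) := hlog
      _ = (Real.log 4 + |q| * Real.log D) * k := by ring
  have hbdd : Filter.IsBoundedUnder (· ≤ ·) atTop u := by
    refine ⟨max (Real.log 4 + |q| * Real.log D) 0, ?_⟩
    rw [Filter.eventually_map]
    filter_upwards [Filter.eventually_ge_atTop 1] with k hk
    exact le_max_of_le_left (hbd k hk)
  have hlim : Filter.limsup u atTop < PA M N σ q + ε := by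
    have : Filter.limsup u atTop = PA M N σ q := rfl
    rw [this]; linarith
  have hev := Filter.eventually_lt_of_limsup_lt hlim hbdd
  filter_upwards [hev, Filter.eventually_ge_atTop 1] with k hk hk1
  have hkR : (0:ℝ) < k := by exact_mod_cast hk1
  have hS := sum_pow_pos M N hN σ k q
  have hlogS : Real.log (∑ ω ∈ wordsF σ k, mnorm (AprodW M N σ ω) ^ q)
      ≤ k * (PA M N σ q + ε) := by
    have : u k * k ≤ (PA M N σ q + ε) * k :=
      mul_le_mul_of_nonneg_right hk.le hkR.le
    rw [hu] at this
    rw [div_mul_cancel₀ _ (ne_of_gt hkR)] at this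
    linarith
  calc ∑ ω ∈ wordsF σ k, mnorm (AprodW M N σ ω) ^ q
      = Real.exp (Real.log (∑ ω ∈ wordsF σ k, mnorm (AprodW M N σ ω) ^ q)) :=
        (Real.exp_log hS).symm
    _ ≤ Real.exp (k * (PA M N σ q + ε)) := Real.exp_le_exp.mpr hlogS

lemma mnorm_aprodW_nonneg (M N : ℕ) (σ : ℕ → Bool) {k : ℕ} (ω : Fin k → ℕ) :
    0 ≤ mnorm (AprodW M N σ ω) := by
  rw [aprodW_eq_ext]
  exact mnorm_nonneg (aprod_nonneg M N σ _ k)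

lemma chi_facts (σ : ℕ → Bool) (n₀ n₁ : ℝ)
    (h0 : Tendsto (fun k : ℕ => (cnt σ false k : ℝ) / (k : ℝ)) atTop (nhds n₀))
    (h1 : Tendsto (fun k : ℕ => (cnt σ true k : ℝ) / (k : ℝ)) atTop (nhds n₁)) :
    n₀ + n₁ = 1 ∧ 0 ≤ n₀ ∧ 0 ≤ n₁ := by
  have hsum : Tendsto (fun k : ℕ => (cnt σ false k : ℝ) / k + (cnt σ true k : ℝ) / k)
      atTop (nhds (n₀ + n₁)) := h0.add h1
  have heq : ∀ᶠ k : ℕ in atTop,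
      (cnt σ false k : ℝ) / k + (cnt σ true k : ℝ) / k = 1 := by
    filter_upwards [eventually_ge_atTop 1] with k hk
    have hkR : (0:ℝ) < k := by exact_mod_cast hk
    rw [← add_div]
    rw [show ((cnt σ false k : ℝ) + (cnt σ true k : ℝ)) = (k:ℝ) by
      exact_mod_cast congrArg (Nat.cast : ℕ → ℝ) (cnt_add σ k)]
    field_simp
  have h1' : Tendsto (fun _ : ℕ => (1:ℝ)) atTop (nhds (n₀ + n₁)) :=
    hsum.congr' heq
  have := tendsto_nhds_unique h1' tendsto_const_nhds
  refine ⟨this, ?_, ?_⟩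
  · exact ge_of_tendsto h0 (Filter.Eventually.of_forall fun k => by positivity)
  · exact ge_of_tendsto h1 (Filter.Eventually.of_forall fun k => by positivity)

set_option maxHeartbeats 1600000 in
lemma key (σ : ℕ → Bool) (M N : ℕ) (hN : 1 ≤ N)
    (n₀ n₁ : ℝ)
    (h0 : Tendsto (fun k : ℕ => (cnt σ false k : ℝ) / (k : ℝ)) atTop (nhds n₀))
    (h1 : Tendsto (fun k : ℕ => (cnt σ true k : ℝ) / (k : ℝ)) atTop (nhds n₁))
    (X : Type) [MetricSpace X] (e : X → ℕ → ℕ)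
    (hinj : Function.Injective e)
    (hrange : Set.range e = {x : ℕ → ℕ | ∀ i, x i ≤ capB (σ i)})
    (hdist : ∀ x y : X, x ≠ y →
      dist x y = (sc σ (sInf {i : ℕ | e x i ≠ e y i} + 1))⁻¹)
    (α q δ : ℝ) (hδ : 0 < δ) :
    dimH {x : X | Tendsto (fun k : ℕ => Real.log (mnorm (Aprod M N σ (e x) k)) / (k : ℝ))
        atTop (nhds α)} ≤
      ENNReal.ofReal
        (max 0 ((n₀ * Real.log 3 + n₁ * Real.log 4)⁻¹ * (-q * α + PA M N σ q)) + δ) := by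
  classical
  borelize X
  obtain ⟨hn01, hn0, hn1⟩ := chi_facts σ n₀ n₁ h0 h1
  set χ : ℝ := n₀ * Real.log 3 + n₁ * Real.log 4 with hχdef
  have hlog34 : Real.log 3 ≤ Real.log 4 := Real.log_le_log (by norm_num) (by norm_num)
  have hlog3 : 0 < Real.log 3 := Real.log_pos (by norm_num)
  have hχ3 : Real.log 3 ≤ χ := by nlinarith
  have hχ : 0 < χ := lt_of_lt_of_le hlog3 hχ3
  set P : ℝ := PA M N σ q with hPdef
  set t : ℝ := χ⁻¹ * (-q * α + P) with htdef
  set s : ℝ := max 0 t + δ with hsdef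
  have hs : 0 < s := by
    have := le_max_left 0 t
    simp only [hsdef]; linarith
  have hχst : -q * α + P ≤ χ * s - χ * δ := by
    have h1' : t ≤ s - δ := by simp only [hsdef]; have := le_max_right 0 t; linarith
    have h2' : χ * t = -q * α + P := by
      rw [htdef, ← mul_assoc, mul_inv_cancel₀ (ne_of_gt hχ), one_mul]
    nlinarith
  set ε : ℝ := χ * δ / (2 * (1 + |q| + s)) with hεdef
  have hden : 0 < 1 + |q| + s := by have := abs_nonneg q; linarith
  have hε : 0 < ε := by rw [hεdef]; positivity
  have hεid : ε + |q| * ε + s * ε = χ * δ / 2 := by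
    rw [hεdef]; field_simp
  have hE : P + ε - q * α + |q| * ε - s * (χ - ε) ≤ -(χ * δ) / 2 := by nlinarith
  -- level sets
  set Lev := {x : X | Tendsto (fun k : ℕ => Real.log (mnorm (Aprod M N σ (e x) k)) / (k : ℝ))
      atTop (nhds α)} with hLev
  set Lm : ℕ → Set X := fun m => {x : X | (∀ i, e x i ≤ capB (σ i)) ∧
      ∀ k : ℕ, m + 1 ≤ k →
        |Real.log (mnorm (Aprod M N σ (e x) k)) - k * α| ≤ k * ε} with hLm
  have hcap : ∀ x : X, ∀ i, e x i ≤ capB (σ i) := by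
    intro x
    have hx : e x ∈ Set.range e := Set.mem_range_self x
    rw [hrange] at hx
    exact hx
  have hsub : Lev ⊆ ⋃ m, Lm m := by
    intro x hx
    have hev := hx.eventually (eventually_abs_sub_lt α hε)
    obtain ⟨m, hm⟩ := Filter.eventually_atTop.mp hev
    refine Set.mem_iUnion.mpr ⟨m, hcap x, ?_⟩
    intro k hk
    have hk0 : (0:ℝ) < k := by
      have : 1 ≤ k := by omega
      exact_mod_cast this
    have h2 : Real.log (mnorm (Aprod M N σ (e x) k)) - k * α
        = k * (Real.log (mnorm (Aprod M N σ (e x) k)) / k - α) := by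
      field_simp
    rw [h2, abs_mul, abs_of_nonneg hk0.le]
    exact mul_le_mul_of_nonneg_left (le_of_lt (hm k (by omega))) hk0.le
  -- eventual lower bound for sc
  have hscEv : ∀ᶠ k : ℕ in atTop, Real.exp (k * (χ - ε)) ≤ sc σ k := by
    have hv : Tendsto (fun k : ℕ => (cnt σ false k : ℝ) / k * Real.log 3
        + (cnt σ true k : ℝ) / k * Real.log 4) atTop (nhds χ) :=
      (h0.mul_const _).add (h1.mul_const _)
    have hev := hv.eventually (eventually_gt_nhds (by linarith : χ - ε < χ))
    filter_upwards [hev, eventually_ge_atTop 1] with k hk hk1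
    have hkR : (0:ℝ) < k := by exact_mod_cast hk1
    have hlogsc : k * (χ - ε) ≤ Real.log (sc σ k) := by
      rw [log_sc]
      have : k * ((cnt σ false k : ℝ) / k * Real.log 3 + (cnt σ true k : ℝ) / k * Real.log 4)
          = (cnt σ false k : ℝ) * Real.log 3 + (cnt σ true k : ℝ) * Real.log 4 := by
        field_simp
      calc k * (χ - ε) ≤ k * ((cnt σ false k : ℝ) / k * Real.log 3
            + (cnt σ true k : ℝ) / k * Real.log 4) :=
            mul_le_mul_of_nonneg_left hk.le hkR.le
        _ = _ := this
    calc Real.exp (k * (χ - ε)) ≤ Real.exp (Real.log (sc σ k)) := Real.exp_le_exp.mpr hlogsc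
      _ = sc σ k := Real.exp_log (sc_pos σ k)
  -- main estimate for each m
  have hkey : ∀ m : ℕ, dimH (Lm m) ≤ ENNReal.ofReal s := by
    intro m
    set tc : ∀ k : ℕ, (Fin k → Fin 4) → Set X := fun k ω =>
      {x : X | x ∈ Lm m ∧ ∀ i : Fin k, e x i = (ω i : ℕ)} with htc
    have hr : Tendsto (fun k : ℕ => ENNReal.ofReal ((sc σ k)⁻¹)) atTop (nhds 0) := by
      have hre : Tendsto (fun k : ℕ => (sc σ k)⁻¹) atTop (nhds 0) := by
        refine tendsto_of_tendsto_of_tendsto_of_le_of_le (g := fun _ : ℕ => (0:ℝ))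
          (h := fun k : ℕ => ((3:ℝ)⁻¹)^k) tendsto_const_nhds
          (tendsto_pow_atTop_nhds_zero_of_lt_one (by norm_num) (by norm_num))
          (fun k => inv_nonneg.mpr (sc_pos σ k).le) (fun k => ?_)
        calc (sc σ k)⁻¹ ≤ ((3:ℝ)^k)⁻¹ :=
              inv_anti₀ (by positivity) (three_pow_le_sc σ k)
          _ = ((3:ℝ)⁻¹)^k := (inv_pow 3 k).symm
      have := ENNReal.tendsto_ofReal (a := 0) hre
      simpa using this
    have ht : ∀ k : ℕ, ∀ ω : Fin k → Fin 4,
        EMetric.diam (tc k ω) ≤ ENNReal.ofReal ((sc σ k)⁻¹) := by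
      intro k ω
      apply EMetric.diam_le
      intro x hx y hy
      by_cases hxy : x = y
      · subst hxy; simp
      · rw [edist_dist, hdist x y hxy]
        have hSne : {i : ℕ | e x i ≠ e y i}.Nonempty := by
          by_contra hc
          apply hxy
          apply hinj
          funext i
          by_contra hne
          exact hc ⟨i, hne⟩
        have hk : k ≤ sInf {i : ℕ | e x i ≠ e y i} := by
          by_contra hc
          push_neg at hc
          have hmem := Nat.sInf_mem hSne
          have hxc := hx.2 ⟨sInf {i : ℕ | e x i ≠ e y i}, hc⟩
          have hyc := hy.2 ⟨sInf {i : ℕ | e x i ≠ e y i}, hc⟩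
          simp only [Set.mem_setOf_eq] at hmem
          exact hmem (hxc.trans hyc.symm)
        apply ENNReal.ofReal_le_ofReal
        exact inv_anti₀ (sc_pos σ k) (sc_mono σ (by omega))
    have hst : ∀ k : ℕ, Lm m ⊆ ⋃ ω : Fin k → Fin 4, tc k ω := by
      intro k x hx
      have h4 : ∀ i : ℕ, e x i < 4 := by
        intro i
        have := hx.1 i
        have := capB_le (σ i)
        omega
      exact Set.mem_iUnion.mpr ⟨fun i => ⟨e x i.1, h4 i.1⟩, hx, fun i => rfl⟩
    have hcover := MeasureTheory.Measure.hausdorffMeasure_le_liminf_sum s (Lm m)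
      (fun k => ENNReal.ofReal ((sc σ k)⁻¹)) hr tc
      (Filter.Eventually.of_forall ht) (Filter.Eventually.of_forall hst)
    -- bound the sums
    have hbound : ∀ᶠ k : ℕ in atTop,
        (∑ ω : Fin k → Fin 4, EMetric.diam (tc k ω) ^ s)
          ≤ ENNReal.ofReal (Real.exp (k * (-(χ * δ) / 2))) := by
      filter_upwards [pressure_eventually M N hN σ q ε hε, hscEv,
        eventually_ge_atTop (m+1)] with k hkP hksc hkm
      set Fk := Finset.univ.filter (fun ω : Fin k → Fin 4 => (tc k ω).Nonempty) with hFk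
      have stepA : (∑ ω : Fin k → Fin 4, EMetric.diam (tc k ω) ^ s)
          ≤ (Fk.card : ENNReal) * ENNReal.ofReal ((sc σ k)⁻¹) ^ s := by
        have h1' : ∀ ω : Fin k → Fin 4, EMetric.diam (tc k ω) ^ s
            ≤ if (tc k ω).Nonempty then ENNReal.ofReal ((sc σ k)⁻¹) ^ s else 0 := by
          intro ω
          by_cases hne : (tc k ω).Nonempty
          · rw [if_pos hne]
            exact ENNReal.rpow_le_rpow (ht k ω) hs.le
          · rw [if_neg hne]
            rw [Set.not_nonempty_iff_eq_empty] at hne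
            rw [hne, show EMetric.diam (∅ : Set X) = 0 from EMetric.diam_empty]
            exact le_of_eq (ENNReal.zero_rpow_of_pos hs)
        calc (∑ ω : Fin k → Fin 4, EMetric.diam (tc k ω) ^ s)
            ≤ ∑ ω : Fin k → Fin 4,
                if (tc k ω).Nonempty then ENNReal.ofReal ((sc σ k)⁻¹) ^ s else 0 :=
              Finset.sum_le_sum fun ω _ => h1' ω
          _ = ∑ _ω ∈ Fk, ENNReal.ofReal ((sc σ k)⁻¹) ^ s := (Finset.sum_filter _ _).symm
          _ = (Fk.card : ENNReal) * ENNReal.ofReal ((sc σ k)⁻¹) ^ s := by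
              rw [Finset.sum_const, nsmul_eq_mul]
      have stepB : (Fk.card : ℝ) * Real.exp (k * q * α - |q| * (k * ε))
          ≤ Real.exp (k * (P + ε)) := by
        set Φ : (Fin k → Fin 4) → (Fin k → ℕ) := fun ω i => (ω i : ℕ) with hΦdef
        have hΦinj : Function.Injective Φ := by
          intro a b hab
          funext i
          exact Fin.val_injective (congrFun hab i)
        have hmemb : ∀ ω ∈ Fk, Φ ω ∈ wordsF σ k ∧
            Real.exp (k * q * α - |q| * (k * ε)) ≤ mnorm (AprodW M N σ (Φ ω)) ^ q := by
          intro ω hω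
          obtain ⟨x, hxL, hxe⟩ := (Finset.mem_filter.mp hω).2
          have hA : AprodW M N σ (Φ ω) = Aprod M N σ (e x) k := by
            have hfe : Φ ω = fun i : Fin k => e x i.1 := by
              funext i; exact (hxe i).symm
            rw [hfe, aprodW_eq_aprod]
          have hm1 : (1:ℝ) ≤ mnorm (AprodW M N σ (Φ ω)) := by
            rw [hA]; exact one_le_mnorm_aprod M N hN σ _ hxL.1 k
          have habs := hxL.2 k hkm
          rw [← hA] at habs
          constructor
          · apply mem_wordsF.mpr
            intro i
            have : Φ ω i = e x i.1 := (hxe i).symm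
            rw [this]
            exact hxL.1 i.1
          · rw [Real.rpow_def_of_pos (lt_of_lt_of_le one_pos hm1)]
            apply Real.exp_le_exp.mpr
            have h2' : |q * (Real.log (mnorm (AprodW M N σ (Φ ω))) - k * α)|
                ≤ |q| * (k * ε) := by
              rw [abs_mul]
              exact mul_le_mul_of_nonneg_left habs (abs_nonneg q)
            have h3' := neg_abs_le (q * (Real.log (mnorm (AprodW M N σ (Φ ω))) - k * α))
            linarith [h2', h3']
        have himgsub : Fk.image Φ ⊆ wordsF σ k := by
          intro ω' hω'
          obtain ⟨ω, hω, rfl⟩ := Finset.mem_image.mp hω'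
          exact (hmemb ω hω).1
        have hcard : (Fk.image Φ).card = Fk.card := Finset.card_image_of_injective Fk hΦinj
        calc (Fk.card : ℝ) * Real.exp (k * q * α - |q| * (k * ε))
            = ∑ _ω' ∈ Fk.image Φ, Real.exp (k * q * α - |q| * (k * ε)) := by
              rw [Finset.sum_const, nsmul_eq_mul, hcard]
          _ ≤ ∑ ω' ∈ Fk.image Φ, mnorm (AprodW M N σ ω') ^ q := by
              refine Finset.sum_le_sum fun ω' hω' => ?_
              obtain ⟨ω, hω, rfl⟩ := Finset.mem_image.mp hω'
              exact (hmemb ω hω).2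
          _ ≤ ∑ ω' ∈ wordsF σ k, mnorm (AprodW M N σ ω') ^ q :=
              Finset.sum_le_sum_of_subset_of_nonneg himgsub fun ω' _ _ =>
                Real.rpow_nonneg (mnorm_aprodW_nonneg M N σ ω') q
          _ ≤ Real.exp (k * (P + ε)) := hkP
      have stepC : ((sc σ k)⁻¹) ^ s ≤ Real.exp (-(k * ((χ - ε) * s))) := by
        have h1' : (sc σ k)⁻¹ ≤ Real.exp (-(k * (χ - ε))) := by
          rw [Real.exp_neg]
          exact inv_anti₀ (Real.exp_pos _) hksc
        calc ((sc σ k)⁻¹) ^ s ≤ (Real.exp (-(k * (χ - ε)))) ^ s :=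
              Real.rpow_le_rpow (inv_nonneg.mpr (sc_pos σ k).le) h1' hs.le
          _ = Real.exp (-(k * (χ - ε)) * s) := (Real.exp_mul _ _).symm
          _ = Real.exp (-(k * ((χ - ε) * s))) := by ring_nf
      have hsc_inv_pos : 0 < (sc σ k)⁻¹ := inv_pos.mpr (sc_pos σ k)
      have hreal : (Fk.card : ℝ) * ((sc σ k)⁻¹) ^ s ≤ Real.exp (k * (-(χ * δ) / 2)) := by
        have hB' : (Fk.card : ℝ) ≤ Real.exp (k * (P + ε) - (k * q * α - |q| * (k * ε))) := by
          rw [Real.exp_sub]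
          rw [le_div_iff₀ (Real.exp_pos _)]
          exact stepB
        calc (Fk.card : ℝ) * ((sc σ k)⁻¹) ^ s
            ≤ Real.exp (k * (P + ε) - (k * q * α - |q| * (k * ε)))
                * Real.exp (-(k * ((χ - ε) * s))) :=
              mul_le_mul hB' stepC (Real.rpow_nonneg hsc_inv_pos.le s) (Real.exp_pos _).le
          _ = Real.exp ((k * (P + ε) - (k * q * α - |q| * (k * ε))) + -(k * ((χ - ε) * s))) :=
              (Real.exp_add _ _).symm
          _ = Real.exp ((k:ℝ) * (P + ε - q * α + |q| * ε - s * (χ - ε))) := by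
              congr 1; ring
          _ ≤ Real.exp (k * (-(χ * δ) / 2)) := by
              apply Real.exp_le_exp.mpr
              exact mul_le_mul_of_nonneg_left hE (Nat.cast_nonneg k)
      calc (∑ ω : Fin k → Fin 4, EMetric.diam (tc k ω) ^ s)
          ≤ (Fk.card : ENNReal) * ENNReal.ofReal ((sc σ k)⁻¹) ^ s := stepA
        _ = ENNReal.ofReal ((Fk.card : ℝ) * ((sc σ k)⁻¹) ^ s) := by
            rw [ENNReal.ofReal_rpow_of_pos hsc_inv_pos]
            rw [ENNReal.ofReal_mul (Nat.cast_nonneg _)]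
            rw [ENNReal.ofReal_natCast]
        _ ≤ ENNReal.ofReal (Real.exp (k * (-(χ * δ) / 2))) := ENNReal.ofReal_le_ofReal hreal
    have hlim0 : Filter.liminf
        (fun k : ℕ => ∑ ω : Fin k → Fin 4, EMetric.diam (tc k ω) ^ s) atTop = 0 := by
      have htend : Tendsto (fun k : ℕ => ENNReal.ofReal (Real.exp (k * (-(χ * δ) / 2))))
          atTop (nhds 0) := by
        have hre : Tendsto (fun k : ℕ => Real.exp (k * (-(χ * δ) / 2))) atTop (nhds 0) := by
          have heq : ∀ k : ℕ, Real.exp (k * (-(χ * δ) / 2))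
              = (Real.exp (-(χ * δ) / 2))^k := by
            intro k
            rw [← Real.exp_nat_mul]
          simp_rw [heq]
          exact tendsto_pow_atTop_nhds_zero_of_lt_one (Real.exp_pos _).le
            (Real.exp_lt_one_iff.mpr (by nlinarith))
        have := ENNReal.tendsto_ofReal (a := 0) hre
        simpa using this
      refine le_antisymm ?_ zero_le
      calc Filter.liminf (fun k : ℕ => ∑ ω : Fin k → Fin 4, EMetric.diam (tc k ω) ^ s) atTop
          ≤ Filter.liminf (fun k : ℕ => ENNReal.ofReal (Real.exp (k * (-(χ * δ) / 2)))) atTop :=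
            Filter.liminf_le_liminf hbound
        _ = 0 := htend.liminf_eq
    have hμ : μH[s] (Lm m) = 0 :=
      le_antisymm (hcover.trans (le_of_eq hlim0)) zero_le
    have hd : dimH (Lm m) ≤ ((s.toNNReal : NNReal) : ENNReal) := by
      apply dimH_le_of_hausdorffMeasure_ne_top (d := s.toNNReal)
      show μH[((s.toNNReal : NNReal) : ℝ)] (Lm m) ≠ ⊤
      rw [Real.coe_toNNReal s hs.le, hμ]
      exact ENNReal.zero_ne_top
    exact hd
  calc dimH Lev ≤ dimH (⋃ m, Lm m) := dimH_mono hsub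
    _ = ⨆ m, dimH (Lm m) := dimH_iUnion Lm
    _ ≤ ENNReal.ofReal s := iSup_le hkey

lemma ofReal_max0 (x : ℝ) : ENNReal.ofReal (max 0 x) = ENNReal.ofReal x := by
  rcases le_total x 0 with h | h
  · rw [max_eq_left h, ENNReal.ofReal_zero, ENNReal.ofReal_of_nonpos h]
  · rw [max_eq_right h]

end S16

theorem stmt16' (σ : ℕ → Bool) (M N : ℕ) (hN : 1 ≤ N) (hMN : Nat.Coprime M N)
    (n₀ n₁ : ℝ)
    (h0 : Tendsto (fun k : ℕ => (cnt σ false k : ℝ) / (k : ℝ)) atTop (nhds n₀))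
    (h1 : Tendsto (fun k : ℕ => (cnt σ true k : ℝ) / (k : ℝ)) atTop (nhds n₁))
    (X : Type) [MetricSpace X] (e : X → ℕ → ℕ)
    (hinj : Function.Injective e)
    (hrange : Set.range e = {x : ℕ → ℕ | ∀ i, x i ≤ capB (σ i)})
    (hdist : ∀ x y : X, x ≠ y →
      dist x y = (sc σ (sInf {i : ℕ | e x i ≠ e y i} + 1))⁻¹)
    (α : ℝ) :
    dimH {x : X | Tendsto (fun k : ℕ => Real.log (mnorm (Aprod M N σ (e x) k)) / (k : ℝ))
        atTop (nhds α)} ≤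
      ENNReal.ofReal ((n₀ * Real.log 3 + n₁ * Real.log 4)⁻¹ *
        ⨅ q : ℝ, (-q * α + PA M N σ q)) := by
  obtain ⟨hn01, hn0, hn1⟩ := S16.chi_facts σ n₀ n₁ h0 h1
  have hlog34 : Real.log 3 ≤ Real.log 4 := Real.log_le_log (by norm_num) (by norm_num)
  have hlog3 : 0 < Real.log 3 := Real.log_pos (by norm_num)
  have hχ : 0 < n₀ * Real.log 3 + n₁ * Real.log 4 := by nlinarith
  set χ : ℝ := n₀ * Real.log 3 + n₁ * Real.log 4 with hχdef
  set I : ℝ := ⨅ q : ℝ, (-q * α + PA M N σ q) with hIdef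
  apply ENNReal.le_of_forall_pos_le_add
  intro ε' hε' _
  have hε'R : (0:ℝ) < (ε' : ℝ) := hε'
  have hlt : I < I + χ * ((ε' : ℝ) / 2) := lt_add_of_pos_right I (by positivity)
  obtain ⟨q, hq⟩ := exists_lt_of_ciInf_lt (hIdef ▸ hlt)
  have hkey := S16.key σ M N hN n₀ n₁ h0 h1 X e hinj hrange hdist α q ((ε' : ℝ)/2)
    (by positivity)
  refine le_trans hkey ?_
  have hmax : max 0 (χ⁻¹ * (-q * α + PA M N σ q)) ≤ max 0 (χ⁻¹ * I) + (ε' : ℝ) / 2 := by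
    rcases le_total (χ⁻¹ * (-q * α + PA M N σ q)) 0 with h | h
    · calc max 0 (χ⁻¹ * (-q * α + PA M N σ q)) = 0 := max_eq_left h
        _ ≤ max 0 (χ⁻¹ * I) + (ε' : ℝ) / 2 := by
            have := le_max_left 0 (χ⁻¹ * I)
            linarith
    · have hle : χ⁻¹ * (-q * α + PA M N σ q) ≤ χ⁻¹ * I + (ε' : ℝ) / 2 := by
        have h2 := mul_le_mul_of_nonneg_left hq.le (inv_nonneg.mpr hχ.le)
        have h3 : χ⁻¹ * (I + χ * ((ε':ℝ) / 2)) = χ⁻¹ * I + (ε':ℝ) / 2 := by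
          field_simp
        rw [h3] at h2
        exact h2
      calc max 0 (χ⁻¹ * (-q * α + PA M N σ q)) = χ⁻¹ * (-q * α + PA M N σ q) :=
            max_eq_right h
        _ ≤ χ⁻¹ * I + (ε' : ℝ) / 2 := hle
        _ ≤ max 0 (χ⁻¹ * I) + (ε' : ℝ) / 2 := by
            have := le_max_right 0 (χ⁻¹ * I)
            linarith
  calc ENNReal.ofReal (max 0 (χ⁻¹ * (-q * α + PA M N σ q)) + (ε' : ℝ) / 2)
      ≤ ENNReal.ofReal (max 0 (χ⁻¹ * I) + ((ε' : ℝ) / 2 + (ε' : ℝ) / 2)) :=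
        ENNReal.ofReal_le_ofReal (by linarith)
    _ ≤ ENNReal.ofReal (max 0 (χ⁻¹ * I)) + ENNReal.ofReal ((ε' : ℝ) / 2 + (ε' : ℝ) / 2) :=
        ENNReal.ofReal_add_le
    _ = ENNReal.ofReal (χ⁻¹ * I) + (ε' : ENNReal) := by
        rw [S16.ofReal_max0]
        congr 1
        rw [show (ε' : ℝ) / 2 + (ε' : ℝ) / 2 = (ε' : ℝ) by ring]
        exact ENNReal.ofReal_coe_nnreal
/-- multifractal upper bound for the Lyapunov level sets in Σ_σ
(represented by an abstract metric space X with coding map e). -/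
theorem stmt16 (σ : ℕ → Bool) (M N : ℕ) (hN : 1 ≤ N) (hMN : Nat.Coprime M N)
    (n₀ n₁ : ℝ)
    (h0 : Tendsto (fun k : ℕ => (cnt σ false k : ℝ) / (k : ℝ)) atTop (nhds n₀))
    (h1 : Tendsto (fun k : ℕ => (cnt σ true k : ℝ) / (k : ℝ)) atTop (nhds n₁))
    (X : Type) [MetricSpace X] (e : X → ℕ → ℕ)
    (hinj : Function.Injective e)
    (hrange : Set.range e = {x : ℕ → ℕ | ∀ i, x i ≤ capB (σ i)})
    (hdist : ∀ x y : X, x ≠ y →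
      dist x y = (sc σ (sInf {i : ℕ | e x i ≠ e y i} + 1))⁻¹)
    (α : ℝ) :
    dimH {x : X | Tendsto (fun k : ℕ => Real.log (mnorm (Aprod M N σ (e x) k)) / (k : ℝ))
        atTop (nhds α)} ≤
      ENNReal.ofReal ((n₀ * Real.log 3 + n₁ * Real.log 4)⁻¹ *
        ⨅ q : ℝ, (-q * α + PA M N σ q)) :=
  stmt16' σ M N hN hMN n₀ n₁ h0 h1 X e hinj hrange hdist α
end
end

section
/- Assume the frequencies n₀ = lim_{k→∞} n₀(k)/k and n₁ = lim_{k→∞} n₁(k)/k exist. For every α ∈ ℝ with E(α) ≠ ∅, dim_H(E(α)) ≤ inf_{q∈ℝ} { −qα + P_A(q)/(n₀·log 3 + n₁·log 4) }. -/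
open Set Filter

noncomputable section

/-! ### Auxiliary lemmas -/

section AuxA

lemma ratioB_ge (b : Bool) : (3:ℝ) ≤ ratioB b := by cases b <;> norm_num [ratioB]

lemma ratioB_pos (b : Bool) : (0:ℝ) < ratioB b := lt_of_lt_of_le (by norm_num) (ratioB_ge b)

lemma cnt_zero (σ : ℕ → Bool) (b : Bool) : cnt σ b 0 = 0 := rfl

lemma cnt_succ (σ : ℕ → Bool) (b : Bool) (k : ℕ) :
    cnt σ b (k+1) = cnt σ b k + (if σ k = b then 1 else 0) := by
  unfold cnt
  rw [Finset.range_add_one, Finset.filter_insert]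
  split
  · rw [Finset.card_insert_of_notMem (by simp)]
  · simp

lemma cnt_add (σ : ℕ → Bool) (k : ℕ) : cnt σ false k + cnt σ true k = k := by
  classical
  have h := Finset.card_filter_add_card_filter_not
    (s := Finset.range k) (p := fun i => σ i = false)
  simpa [cnt] using h

lemma sc_zero (σ : ℕ → Bool) : sc σ 0 = 1 := by simp [sc, cnt_zero]

lemma sc_pos (σ : ℕ → Bool) (k : ℕ) : 0 < sc σ k := by
  unfold sc; positivity

lemma sc_succ (σ : ℕ → Bool) (k : ℕ) : sc σ (k+1) = sc σ k * ratioB (σ k) := by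
  rcases h : σ k with _ | _ <;>
    simp [sc, cnt_succ, h, ratioB, pow_succ] <;> ring

lemma sc_ge_pow (σ : ℕ → Bool) (k : ℕ) : (3:ℝ)^k ≤ sc σ k := by
  induction k with
  | zero => simp [sc_zero]
  | succ k ih =>
      rw [sc_succ, pow_succ]
      have h3 : (0:ℝ) < 3 ^ k := by positivity
      calc (3:ℝ)^k * 3 ≤ sc σ k * 3 := by nlinarith [sc_pos σ k]
        _ ≤ sc σ k * ratioB (σ k) := by nlinarith [sc_pos σ k, ratioB_ge (σ k)]

lemma sc_mul_le (σ : ℕ → Bool) (k m : ℕ) : sc σ k * 3^m ≤ sc σ (k+m) := by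
  induction m with
  | zero => simp
  | succ m ih =>
      rw [← add_assoc, sc_succ, pow_succ, ← mul_assoc]
      have := ratioB_ge (σ (k+m))
      nlinarith [sc_pos σ (k+m), sc_pos σ k, pow_pos (show (0:ℝ) < 3 by norm_num) m]

/-- The log-scale L_k. -/
def Lk (σ : ℕ → Bool) (k : ℕ) : ℝ :=
  (cnt σ false k : ℝ) * Real.log 3 + (cnt σ true k : ℝ) * Real.log 4

lemma log_sc (σ : ℕ → Bool) (k : ℕ) : Real.log (sc σ k) = Lk σ k := by
  unfold sc Lk
  rw [Real.log_mul (by positivity) (by positivity), Real.log_pow, Real.log_pow]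

lemma log3_pos : (0:ℝ) < Real.log 3 := Real.log_pos (by norm_num)

lemma log3_le_log4 : Real.log 3 ≤ Real.log 4 :=
  Real.log_le_log (by norm_num) (by norm_num)

lemma Lk_ge (σ : ℕ → Bool) (k : ℕ) : (k:ℝ) * Real.log 3 ≤ Lk σ k := by
  have h := cnt_add σ k
  have h3 := log3_pos
  have h34 := log3_le_log4
  have : (k:ℝ) = (cnt σ false k : ℝ) + (cnt σ true k : ℝ) := by
    rw [← Nat.cast_add, h]
  rw [this]
  unfold Lk
  have c1 : (0:ℝ) ≤ (cnt σ true k : ℝ) := Nat.cast_nonneg _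
  nlinarith

lemma Lk_nonneg (σ : ℕ → Bool) (k : ℕ) : 0 ≤ Lk σ k := by
  have := Lk_ge σ k
  have h3 := log3_pos
  nlinarith [Nat.cast_nonneg (α := ℝ) k]

lemma Lk_pos (σ : ℕ → Bool) {k : ℕ} (hk : 1 ≤ k) : 0 < Lk σ k := by
  have := Lk_ge σ k
  have h3 := log3_pos
  have : (1:ℝ) ≤ (k:ℝ) := by exact_mod_cast hk
  nlinarith [Lk_ge σ k]

end AuxA
section AuxB

/-- Integer window lemma (ratio 3 system). -/
lemma window2 (M N : ℕ) (hN : 1 ≤ N) (P j : ℤ)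
    (hP1 : 1 ≤ P) (hP2 : P ≤ (N:ℤ) + M) (hj0 : 0 ≤ j) (hj1 : j ≤ 2) :
    ∃ d1 d2 Q : ℤ, 0 ≤ d1 ∧ d1 ≤ 2 ∧ 0 ≤ d2 ∧ d2 ≤ 2 ∧ (d1 = 0 ∨ d2 = 0) ∧
      1 ≤ Q ∧ Q ≤ (N:ℤ) + M ∧
      d1 * M - d2 * N = (2:ℤ) * M + 2 + Q - 3 * P - j := by
  have hM : (0:ℤ) ≤ (M:ℤ) := Int.natCast_nonneg M
  have hNz : (1:ℤ) ≤ (N:ℤ) := by exact_mod_cast hN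
  set s : ℤ := (2:ℤ) * M + 2 + 1 - 3 * P - j with hs
  rcases le_or_gt s 0 with h0 | h0
  · rcases le_or_gt (-(N:ℤ) - M + 1) s with h1 | h1
    · exact ⟨0, 0, 1 - s, by omega⟩
    · rcases le_or_gt (-2*(N:ℤ) - M + 1) s with h2 | h2
      · exact ⟨0, 1, -(N:ℤ) - s + 1, by omega⟩
      · exact ⟨0, 2, -2*(N:ℤ) - s + 1, by omega⟩
  · rcases le_or_gt s (M:ℤ) with h1 | h1
    · exact ⟨1, 0, (M:ℤ) - s + 1, by omega⟩
    · exact ⟨2, 0, 2*(M:ℤ) - s + 1, by omega⟩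

/-- Integer window lemma (ratio 4 system). -/
lemma window3 (M N : ℕ) (hN : 1 ≤ N) (P j : ℤ)
    (hP1 : 1 ≤ P) (hP2 : P ≤ (N:ℤ) + M) (hj0 : 0 ≤ j) (hj1 : j ≤ 3) :
    ∃ d1 d2 Q : ℤ, 0 ≤ d1 ∧ d1 ≤ 3 ∧ 0 ≤ d2 ∧ d2 ≤ 3 ∧ (d1 = 0 ∨ d2 = 0) ∧
      1 ≤ Q ∧ Q ≤ (N:ℤ) + M ∧
      d1 * M - d2 * N = (3:ℤ) * M + 3 + Q - 4 * P - j := by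
  have hM : (0:ℤ) ≤ (M:ℤ) := Int.natCast_nonneg M
  have hNz : (1:ℤ) ≤ (N:ℤ) := by exact_mod_cast hN
  set s : ℤ := (3:ℤ) * M + 3 + 1 - 4 * P - j with hs
  rcases le_or_gt s 0 with h0 | h0
  · rcases le_or_gt (-(N:ℤ) - M + 1) s with h1 | h1
    · exact ⟨0, 0, 1 - s, by omega⟩
    · rcases le_or_gt (-2*(N:ℤ) - M + 1) s with h2 | h2
      · exact ⟨0, 1, -(N:ℤ) - s + 1, by omega⟩
      · rcases le_or_gt (-3*(N:ℤ) - M + 1) s with h3 | h3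
        · exact ⟨0, 2, -2*(N:ℤ) - s + 1, by omega⟩
        · exact ⟨0, 3, -3*(N:ℤ) - s + 1, by omega⟩
  · rcases le_or_gt s (M:ℤ) with h1 | h1
    · exact ⟨1, 0, (M:ℤ) - s + 1, by omega⟩
    · rcases le_or_gt s (2*(M:ℤ)) with h2 | h2
      · exact ⟨2, 0, 2*(M:ℤ) - s + 1, by omega⟩
      · exact ⟨3, 0, 3*(M:ℤ) - s + 1, by omega⟩

set_option maxHeartbeats 1000000 in
lemma rowpos (M N : ℕ) (hN : 1 ≤ N) (b : Bool) (j : ℕ) (hj : j ≤ capB b)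
    (p : Fin (N + M)) : ∃ q : Fin (N + M), 0 < Amat M N b j p q := by
  cases b
  · -- b = false
    simp only [capB] at hj
    obtain ⟨d1, d2, Q, hd10, hd1R, hd20, hd2R, haxis, hQ1, hQ2, heq⟩ :=
      window2 M N hN ((p:ℕ) + 1) (j:ℤ)
        (by exact_mod_cast Nat.succ_le_succ (Nat.zero_le _))
        (by push_cast; exact_mod_cast Nat.succ_le_of_lt p.2)
        (Int.natCast_nonneg j) (by omega)
    have hQN : Q.toNat - 1 < N + M := by omega
    refine ⟨⟨Q.toNat - 1, hQN⟩, ?_⟩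
    have hmem : ((d1, d2) : ℤ × ℤ) ∈ Dig0 := by
      simp only [Dig0, Finset.mem_insert, Finset.mem_singleton, Prod.mk.injEq]
      omega
    simp only [Amat, A0mat, Matrix.of_apply]
    refine Nat.cast_pos.mpr (Finset.card_pos.mpr
      ⟨(d1, d2), Finset.mem_filter.mpr ⟨hmem, ?_⟩⟩)
    rw [show ((((⟨Q.toNat - 1, hQN⟩ : Fin (N+M)) : ℕ)) : ℤ) = Q - 1 by
      simp only [Fin.val_mk]; omega]
    push_cast at heq ⊢
    linarith
  · -- b = true
    simp only [capB] at hj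
    obtain ⟨d1, d2, Q, hd10, hd1R, hd20, hd2R, haxis, hQ1, hQ2, heq⟩ :=
      window3 M N hN ((p:ℕ) + 1) (j:ℤ)
        (by exact_mod_cast Nat.succ_le_succ (Nat.zero_le _))
        (by push_cast; exact_mod_cast Nat.succ_le_of_lt p.2)
        (Int.natCast_nonneg j) (by omega)
    have hQN : Q.toNat - 1 < N + M := by omega
    refine ⟨⟨Q.toNat - 1, hQN⟩, ?_⟩
    have hmem : ((d1, d2) : ℤ × ℤ) ∈ Dig1 := by
      simp only [Dig1, Finset.mem_insert, Finset.mem_singleton, Prod.mk.injEq]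
      omega
    simp only [Amat, A1mat, Matrix.of_apply]
    refine Nat.cast_pos.mpr (Finset.card_pos.mpr
      ⟨(d1, d2), Finset.mem_filter.mpr ⟨hmem, ?_⟩⟩)
    rw [show ((((⟨Q.toNat - 1, hQN⟩ : Fin (N+M)) : ℕ)) : ℤ) = Q - 1 by
      simp only [Fin.val_mk]; omega]
    push_cast at heq ⊢
    linarith

end AuxB
section AuxC

/-- Natural-number version of the matrices. -/
def AmatN (M N : ℕ) : Bool → ℕ → Matrix (Fin (N + M)) (Fin (N + M)) ℕ
  | false => fun j => Matrix.of fun p q =>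
      (Dig0.filter (fun d => d.1 * (M : ℤ) - d.2 * (N : ℤ) =
        2 * (M : ℤ) + 2 + ((q : ℕ) + 1 : ℤ) - 3 * ((p : ℕ) + 1 : ℤ) - (j : ℤ))).card
  | true => fun j => Matrix.of fun p q =>
      (Dig1.filter (fun d => d.1 * (M : ℤ) - d.2 * (N : ℤ) =
        3 * (M : ℤ) + 3 + ((q : ℕ) + 1 : ℤ) - 4 * ((p : ℕ) + 1 : ℤ) - (j : ℤ))).card

lemma Amat_eq_map (M N : ℕ) (b : Bool) (j : ℕ) :
    Amat M N b j = (AmatN M N b j).map (Nat.cast : ℕ → ℝ) := by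
  cases b <;> rfl

lemma Aprod_succ (M N : ℕ) (σ : ℕ → Bool) (ξ : ℕ → ℕ) (k : ℕ) :
    Aprod M N σ ξ (k + 1) = Aprod M N σ ξ k * Amat M N (σ k) (ξ k) := by
  unfold Aprod
  rw [List.range_succ, List.map_append, List.prod_append, List.map_singleton,
    List.prod_singleton]

lemma Aprod_eq_map (M N : ℕ) (σ : ℕ → Bool) (ξ : ℕ → ℕ) (k : ℕ) :
    Aprod M N σ ξ k =
      (((List.range k).map (fun i => AmatN M N (σ i) (ξ i))).prod).map
        (Nat.cast : ℕ → ℝ) := by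
  induction k with
  | zero =>
      simp only [Aprod, List.range_zero, List.map_nil, List.prod_nil]
      exact (Matrix.map_one _ (by simp) (by simp)).symm
  | succ k ih =>
      rw [Aprod_succ, ih, List.range_succ, List.map_append, List.prod_append,
        List.map_singleton, List.prod_singleton, Amat_eq_map]
      exact (Matrix.map_mul (f := Nat.castRingHom ℝ)).symm

lemma Aprod_entry_nonneg (M N : ℕ) (σ : ℕ → Bool) (ξ : ℕ → ℕ) (k : ℕ)
    (p q : Fin (N + M)) : 0 ≤ Aprod M N σ ξ k p q := by
  rw [Aprod_eq_map]
  exact Nat.cast_nonneg _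

lemma Amat_entry_nonneg (M N : ℕ) (b : Bool) (j : ℕ) (p q : Fin (N + M)) :
    0 ≤ Amat M N b j p q := by
  rw [Amat_eq_map]; exact Nat.cast_nonneg _

lemma Aprod_rowpos (M N : ℕ) (hN : 1 ≤ N) (σ : ℕ → Bool) (ξ : ℕ → ℕ)
    (hξ : ∀ i, ξ i ≤ capB (σ i)) (k : ℕ) (p : Fin (N + M)) :
    ∃ q, 0 < Aprod M N σ ξ k p q := by
  induction k generalizing p with
  | zero =>
      refine ⟨p, ?_⟩
      simp [Aprod]
  | succ k ih =>
      obtain ⟨r, hr⟩ := ih p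
      obtain ⟨q, hq⟩ := rowpos M N hN (σ k) (ξ k) (hξ k) r
      refine ⟨q, ?_⟩
      rw [Aprod_succ, Matrix.mul_apply]
      refine Finset.sum_pos' (fun i _ => mul_nonneg (Aprod_entry_nonneg _ _ _ _ _ _ _)
        (Amat_entry_nonneg _ _ _ _ _ _)) ⟨r, Finset.mem_univ r, mul_pos hr hq⟩

/-- The sum of entries of a nonnegative matrix is submultiplicative. -/
lemma mnorm_mul_le {n : ℕ} (X Y : Matrix (Fin n) (Fin n) ℝ)
    (hX : ∀ p q, 0 ≤ X p q) (hY : ∀ p q, 0 ≤ Y p q) :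
    mnorm (X * Y) ≤ mnorm X * mnorm Y := by
  have hrow : ∀ r, (∑ q, Y r q) ≤ mnorm Y := fun r =>
    Finset.single_le_sum (f := fun r => ∑ q, Y r q)
      (fun i _ => Finset.sum_nonneg fun j _ => hY i j) (Finset.mem_univ r)
  have h1 : mnorm (X * Y) = ∑ p, ∑ r, X p r * ∑ q, Y r q := by
    unfold mnorm
    refine Finset.sum_congr rfl fun p _ => ?_
    calc ∑ q, (X * Y) p q = ∑ q, ∑ r, X p r * Y r q :=
          Finset.sum_congr rfl fun q _ => Matrix.mul_apply
      _ = ∑ r, ∑ q, X p r * Y r q := Finset.sum_comm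
      _ = ∑ r, X p r * ∑ q, Y r q :=
          Finset.sum_congr rfl fun r _ => (Finset.mul_sum _ _ _).symm
  rw [h1]
  calc ∑ p, ∑ r, X p r * ∑ q, Y r q ≤ ∑ p, ∑ r, X p r * mnorm Y := by
        refine Finset.sum_le_sum fun p _ => Finset.sum_le_sum fun r _ =>
          mul_le_mul_of_nonneg_left (hrow r) (hX p r)
    _ = mnorm X * mnorm Y := by
        unfold mnorm
        rw [Finset.sum_mul]
        exact Finset.sum_congr rfl fun p _ => (Finset.sum_mul _ _ _).symm

lemma mnorm_nonneg {n : ℕ} (X : Matrix (Fin n) (Fin n) ℝ) (hX : ∀ p q, 0 ≤ X p q) :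
    0 ≤ mnorm X :=
  Finset.sum_nonneg fun p _ => Finset.sum_nonneg fun q _ => hX p q

lemma mnorm_one (n : ℕ) : mnorm (1 : Matrix (Fin n) (Fin n) ℝ) = n := by
  unfold mnorm
  have : ∀ p : Fin n, ∑ q, (1 : Matrix (Fin n) (Fin n) ℝ) p q = 1 := by
    intro p
    rw [show (∑ q, (1 : Matrix (Fin n) (Fin n) ℝ) p q) = ∑ q, if p = q then (1:ℝ) else 0 from
      Finset.sum_congr rfl fun q _ => Matrix.one_apply]
    simp
  rw [Finset.sum_congr rfl fun p _ => this p]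
  simp

lemma mnorm_Amat_le (M N : ℕ) (b : Bool) (j : ℕ) :
    mnorm (Amat M N b j) ≤ 12 * ((N:ℝ) + M)^2 := by
  have hent : ∀ p q, Amat M N b j p q ≤ 12 := by
    intro p q
    cases b <;>
      · simp only [Amat, A0mat, A1mat, Matrix.of_apply]
        have h1 := Finset.card_filter_le (s := Dig0) (p := fun d => d.1 * (M : ℤ) - d.2 * (N : ℤ) =
          2 * (M : ℤ) + 2 + ((q : ℕ) + 1 : ℤ) - 3 * ((p : ℕ) + 1 : ℤ) - (j : ℤ))
        have h2 := Finset.card_filter_le (s := Dig1) (p := fun d => d.1 * (M : ℤ) - d.2 * (N : ℤ) =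
          3 * (M : ℤ) + 3 + ((q : ℕ) + 1 : ℤ) - 4 * ((p : ℕ) + 1 : ℤ) - (j : ℤ))
        have hc0 : Dig0.card = 8 := by decide
        have hc1 : Dig1.card = 12 := by decide
        first
          | (refine le_trans (Nat.cast_le.mpr (h1.trans_eq hc0)) (by norm_num))
          | (refine le_trans (Nat.cast_le.mpr (h2.trans_eq hc1)) (by norm_num))
  calc mnorm (Amat M N b j) ≤ ∑ p : Fin (N+M), ∑ q : Fin (N+M), (12:ℝ) :=
        Finset.sum_le_sum fun p _ => Finset.sum_le_sum fun q _ => hent p q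
    _ ≤ 12 * ((N:ℝ) + M)^2 := by
        simp only [Finset.sum_const, Finset.card_univ, Fintype.card_fin, nsmul_eq_mul]
        push_cast
        nlinarith [(Nat.cast_nonneg N : (0:ℝ) ≤ N), (Nat.cast_nonneg M : (0:ℝ) ≤ M)]

lemma mnorm_Aprod_le (M N : ℕ) (σ : ℕ → Bool) (ξ : ℕ → ℕ) (k : ℕ) :
    mnorm (Aprod M N σ ξ k) ≤ ((N:ℝ) + M) * (12 * ((N:ℝ) + M)^2)^k := by
  induction k with
  | zero =>
      have : Aprod M N σ ξ 0 = (1 : Matrix (Fin (N+M)) (Fin (N+M)) ℝ) := by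
        simp [Aprod]
      rw [this, mnorm_one]
      push_cast; simp
  | succ k ih =>
      rw [Aprod_succ]
      have h := mnorm_mul_le (Aprod M N σ ξ k) (Amat M N (σ k) (ξ k))
        (fun p q => Aprod_entry_nonneg M N σ ξ k p q)
        (fun p q => Amat_entry_nonneg M N (σ k) (ξ k) p q)
      have hA := mnorm_Amat_le M N (σ k) (ξ k)
      have hnn : 0 ≤ mnorm (Aprod M N σ ξ k) :=
        mnorm_nonneg _ (fun p q => Aprod_entry_nonneg M N σ ξ k p q)
      calc mnorm (Aprod M N σ ξ k * Amat M N (σ k) (ξ k))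
          ≤ mnorm (Aprod M N σ ξ k) * mnorm (Amat M N (σ k) (ξ k)) := h
        _ ≤ (((N:ℝ) + M) * (12 * ((N:ℝ) + M)^2)^k) * (12 * ((N:ℝ) + M)^2) := by
            have hAnn : 0 ≤ mnorm (Amat M N (σ k) (ξ k)) :=
              mnorm_nonneg _ (fun p q => Amat_entry_nonneg M N (σ k) (ξ k) p q)
            exact mul_le_mul ih hA hAnn (by positivity)
        _ = ((N:ℝ) + M) * (12 * ((N:ℝ) + M)^2)^(k+1) := by ring

/-- Key lemma: the norm of an admissible product is a natural number between 1 and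
`(N+M) * (12(N+M)²)^k`. -/
lemma mnorm_Aprod_nat (M N : ℕ) (hN : 1 ≤ N) (σ : ℕ → Bool) (ξ : ℕ → ℕ)
    (hξ : ∀ i, ξ i ≤ capB (σ i)) (k : ℕ) :
    ∃ n : ℕ, 1 ≤ n ∧ mnorm (Aprod M N σ ξ k) = (n : ℝ) ∧
      (n : ℝ) ≤ ((N:ℝ) + M) * (12 * ((N:ℝ) + M)^2)^k := by
  set Xn := ((List.range k).map (fun i => AmatN M N (σ i) (ξ i))).prod with hXn
  refine ⟨∑ p, ∑ q, Xn p q, ?_, ?_, ?_⟩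
  · obtain ⟨p⟩ : Nonempty (Fin (N + M)) := ⟨⟨0, by omega⟩⟩
    obtain ⟨q, hq⟩ := Aprod_rowpos M N hN σ ξ hξ k p
    rw [Aprod_eq_map] at hq
    have hq' : 1 ≤ Xn p q := by
      have h2 : (0:ℝ) < ((Xn p q : ℕ) : ℝ) := hq
      have : 0 < Xn p q := by exact_mod_cast h2
      omega
    have h1 : Xn p q ≤ ∑ q', Xn p q' :=
      Finset.single_le_sum (fun i _ => Nat.zero_le _) (Finset.mem_univ q)
    have h2 : (∑ q', Xn p q') ≤ ∑ p', ∑ q', Xn p' q' :=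
      Finset.single_le_sum (f := fun p' => ∑ q', Xn p' q') (fun i _ => Nat.zero_le _)
        (Finset.mem_univ p)
    omega
  · rw [Aprod_eq_map]
    unfold mnorm
    push_cast
    rfl
  · have := mnorm_Aprod_le M N σ ξ k
    have heq : mnorm (Aprod M N σ ξ k) = ((∑ p, ∑ q, Xn p q : ℕ) : ℝ) := by
      rw [Aprod_eq_map]
      unfold mnorm
      push_cast
      rfl
    rw [heq] at this
    exact this

end AuxC

section AuxD

/-- Padding of a finite word to an infinite one. -/
def padW {k : ℕ} (ω : Fin k → ℕ) : ℕ → ℕ := fun i => if h : i < k then ω ⟨i, h⟩ else 0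

lemma AprodW_eq_Aprod (M N : ℕ) (σ : ℕ → Bool) {k : ℕ} (ω : Fin k → ℕ) :
    AprodW M N σ ω = Aprod M N σ (padW ω) k := by
  unfold AprodW Aprod
  congr 1
  rw [List.ofFn_eq_map, ← List.map_coe_finRange_eq_range, List.map_map]
  refine List.map_congr_left fun i _ => ?_
  simp [Function.comp, padW, i.2]

lemma padW_le (σ : ℕ → Bool) {k : ℕ} {ω : Fin k → ℕ} (hω : ω ∈ wordsF σ k) :
    ∀ i, padW ω i ≤ capB (σ i) := by
  intro i
  unfold padW
  split
  · next h =>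
      have := Fintype.mem_piFinset.mp hω ⟨i, h⟩
      simpa [Nat.lt_succ_iff] using this
  · exact Nat.zero_le _

lemma mnorm_AprodW_nat (M N : ℕ) (hN : 1 ≤ N) (σ : ℕ → Bool) {k : ℕ}
    {ω : Fin k → ℕ} (hω : ω ∈ wordsF σ k) :
    ∃ n : ℕ, 1 ≤ n ∧ mnorm (AprodW M N σ ω) = (n : ℝ) ∧
      (n : ℝ) ≤ ((N:ℝ) + M) * (12 * ((N:ℝ) + M)^2)^k := by
  rw [AprodW_eq_Aprod]
  exact mnorm_Aprod_nat M N hN σ (padW ω) (padW_le σ hω) k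

lemma card_wordsF_le (σ : ℕ → Bool) (k : ℕ) : (wordsF σ k).card ≤ 4 ^ k := by
  unfold wordsF
  rw [Fintype.card_piFinset]
  calc ∏ i : Fin k, (Finset.range (capB (σ i.1) + 1)).card
      ≤ ∏ _i : Fin k, 4 := Finset.prod_le_prod (fun _ _ => Nat.zero_le _)
        (fun i _ => by rw [Finset.card_range]; cases σ i.1 <;> simp [capB])
    _ = 4 ^ k := by simp

lemma wordsF_nonempty (σ : ℕ → Bool) (k : ℕ) : (fun _ => 0) ∈ wordsF σ k := by
  refine Fintype.mem_piFinset.mpr fun i => ?_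
  simp

/-- The partition-sum. -/
noncomputable def Ssum (M N : ℕ) (σ : ℕ → Bool) (q : ℝ) (k : ℕ) : ℝ :=
  ∑ ω ∈ wordsF σ k, mnorm (AprodW M N σ ω) ^ q

lemma Ssum_pos (M N : ℕ) (hN : 1 ≤ N) (σ : ℕ → Bool) (q : ℝ) (k : ℕ) :
    0 < Ssum M N σ q k := by
  refine Finset.sum_pos' (fun ω hω => ?_) ⟨(fun _ => 0), wordsF_nonempty σ k, ?_⟩
  · obtain ⟨n, hn1, hn2, _⟩ := mnorm_AprodW_nat M N hN σ hω
    rw [hn2]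
    exact le_of_lt (Real.rpow_pos_of_pos (by exact_mod_cast hn1) q)
  · obtain ⟨n, hn1, hn2, _⟩ := mnorm_AprodW_nat M N hN σ (wordsF_nonempty σ k)
    rw [hn2]
    exact Real.rpow_pos_of_pos (by exact_mod_cast hn1) q

lemma Ssum_le (M N : ℕ) (hN : 1 ≤ N) (σ : ℕ → Bool) (q : ℝ) (k : ℕ) :
    Ssum M N σ q k ≤ 4 ^ k * Real.exp (|q| * (Real.log ((N:ℝ) + M) +
      k * Real.log (12 * ((N:ℝ) + M)^2))) := by
  have hNM : (1:ℝ) ≤ (N:ℝ) + M := by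
    have : (1:ℝ) ≤ (N:ℝ) := by exact_mod_cast hN
    have : (0:ℝ) ≤ (M:ℝ) := Nat.cast_nonneg M
    linarith
  have hC : (1:ℝ) ≤ 12 * ((N:ℝ) + M)^2 := by nlinarith
  have hterm : ∀ ω ∈ wordsF σ k, mnorm (AprodW M N σ ω) ^ q ≤
      Real.exp (|q| * (Real.log ((N:ℝ) + M) + k * Real.log (12 * ((N:ℝ) + M)^2))) := by
    intro ω hω
    obtain ⟨n, hn1, hn2, hn3⟩ := mnorm_AprodW_nat M N hN σ hω
    rw [hn2]
    have hnpos : (0:ℝ) < n := by exact_mod_cast hn1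
    rw [Real.rpow_def_of_pos hnpos]
    apply Real.exp_le_exp.mpr
    have hlog1 : 0 ≤ Real.log (n:ℝ) := Real.log_nonneg (by exact_mod_cast hn1)
    have hlog2 : Real.log (n:ℝ) ≤ Real.log ((N:ℝ) + M) + k * Real.log (12 * ((N:ℝ) + M)^2) := by
      calc Real.log (n:ℝ) ≤ Real.log (((N:ℝ) + M) * (12 * ((N:ℝ) + M)^2)^k) :=
            Real.log_le_log hnpos hn3
        _ = Real.log ((N:ℝ) + M) + k * Real.log (12 * ((N:ℝ) + M)^2) := by
            rw [Real.log_mul (by linarith) (by positivity), Real.log_pow]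
    calc Real.log (n:ℝ) * q ≤ |Real.log (n:ℝ) * q| := le_abs_self _
      _ = |q| * Real.log (n:ℝ) := by rw [abs_mul, abs_of_nonneg hlog1]; ring
      _ ≤ |q| * (Real.log ((N:ℝ) + M) + k * Real.log (12 * ((N:ℝ) + M)^2)) :=
          mul_le_mul_of_nonneg_left hlog2 (abs_nonneg q)
  calc Ssum M N σ q k ≤ ∑ _ω ∈ wordsF σ k,
        Real.exp (|q| * (Real.log ((N:ℝ) + M) + k * Real.log (12 * ((N:ℝ) + M)^2))) :=
        Finset.sum_le_sum hterm
    _ = (wordsF σ k).card * Real.exp (|q| * (Real.log ((N:ℝ) + M) +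
          k * Real.log (12 * ((N:ℝ) + M)^2))) := by rw [Finset.sum_const, nsmul_eq_mul]
    _ ≤ 4 ^ k * Real.exp (|q| * (Real.log ((N:ℝ) + M) +
          k * Real.log (12 * ((N:ℝ) + M)^2))) := by
        have : ((wordsF σ k).card : ℝ) ≤ (4:ℝ) ^ k := by
          exact_mod_cast card_wordsF_le σ k
        exact mul_le_mul_of_nonneg_right this (Real.exp_nonneg _)

lemma PA_bddAbove (M N : ℕ) (hN : 1 ≤ N) (σ : ℕ → Bool) (q : ℝ) :
    Filter.IsBoundedUnder (· ≤ ·) Filter.atTop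
      (fun k : ℕ => Real.log (Ssum M N σ q k) / (k : ℝ)) := by
  have hNM : (1:ℝ) ≤ (N:ℝ) + M := by
    have h1 : (1:ℝ) ≤ (N:ℝ) := by exact_mod_cast hN
    have h2 : (0:ℝ) ≤ (M:ℝ) := Nat.cast_nonneg M
    linarith
  have hC : (1:ℝ) ≤ 12 * ((N:ℝ) + M)^2 := by nlinarith
  set D : ℝ := Real.log 4 + |q| * Real.log ((N:ℝ) + M) + |q| * Real.log (12 * ((N:ℝ) + M)^2)
    with hD
  have hD0 : 0 ≤ D := by
    have := Real.log_nonneg hNM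
    have := Real.log_nonneg hC
    have := Real.log_nonneg (show (1:ℝ) ≤ 4 by norm_num)
    positivity
  refine Filter.isBoundedUnder_of ⟨D, fun k => ?_⟩
  rcases Nat.eq_zero_or_pos k with hk | hk
  · subst hk; simp [hD0]
  have hkR : (0:ℝ) < (k:ℝ) := by exact_mod_cast hk
  rw [div_le_iff₀ hkR]
  have hlog : Real.log (Ssum M N σ q k) ≤ (k:ℝ) * Real.log 4 +
      |q| * (Real.log ((N:ℝ) + M) + k * Real.log (12 * ((N:ℝ) + M)^2)) := by
    calc Real.log (Ssum M N σ q k)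
        ≤ Real.log (4 ^ k * Real.exp (|q| * (Real.log ((N:ℝ) + M) +
            k * Real.log (12 * ((N:ℝ) + M)^2)))) :=
          Real.log_le_log (Ssum_pos M N hN σ q k) (Ssum_le M N hN σ q k)
      _ = (k:ℝ) * Real.log 4 + |q| * (Real.log ((N:ℝ) + M) +
            k * Real.log (12 * ((N:ℝ) + M)^2)) := by
          rw [Real.log_mul (by positivity) (Real.exp_ne_zero _), Real.log_pow,
            Real.log_exp]
    -- done
  have hk1 : (1:ℝ) ≤ (k:ℝ) := by exact_mod_cast hk
  have h1 : 0 ≤ |q| * Real.log ((N:ℝ) + M) := by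
    have := Real.log_nonneg hNM; positivity
  have h2 : 0 ≤ |q| * Real.log (12 * ((N:ℝ) + M)^2) := by
    have := Real.log_nonneg hC; positivity
  calc Real.log (Ssum M N σ q k) ≤ (k:ℝ) * Real.log 4 +
      |q| * (Real.log ((N:ℝ) + M) + k * Real.log (12 * ((N:ℝ) + M)^2)) := hlog
    _ ≤ D * k := by rw [hD]; ring_nf; nlinarith

lemma Ssum_eventually_le (M N : ℕ) (hN : 1 ≤ N) (σ : ℕ → Bool) (q ε : ℝ) (hε : 0 < ε) :
    ∀ᶠ k in Filter.atTop, Ssum M N σ q k ≤ Real.exp ((PA M N σ q + ε) * k) := by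
  have hlt : Filter.limsup (fun k : ℕ => Real.log (Ssum M N σ q k) / (k : ℝ))
      Filter.atTop < PA M N σ q + ε := by
    have : PA M N σ q = Filter.limsup
        (fun k : ℕ => Real.log (Ssum M N σ q k) / (k : ℝ)) Filter.atTop := rfl
    rw [← this]; linarith
  have hev := Filter.eventually_lt_of_limsup_lt hlt (PA_bddAbove M N hN σ q)
  filter_upwards [hev, Filter.eventually_ge_atTop 1] with k hk hk1
  have hkR : (0:ℝ) < (k:ℝ) := by exact_mod_cast hk1
  rw [div_lt_iff₀ hkR] at hk
  have := Real.exp_log (Ssum_pos M N hN σ q k)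
  calc Ssum M N σ q k = Real.exp (Real.log (Ssum M N σ q k)) := this.symm
    _ ≤ Real.exp ((PA M N σ q + ε) * k) := Real.exp_le_exp.mpr (le_of_lt hk)

end AuxD
section AuxE

open Filter

/-- The words selected at level `k` (with log-norm close to `α`). -/
noncomputable def Tsel (M N : ℕ) (σ : ℕ → Bool) (α ε : ℝ) (k : ℕ) : Finset (Fin k → ℕ) :=
  (wordsF σ k).filter (fun ω =>
    |Real.log (mnorm (AprodW M N σ ω)) - α * Lk σ k| ≤ ε * Lk σ k)

lemma markov (M N : ℕ) (hN : 1 ≤ N) (σ : ℕ → Bool) (q α ε : ℝ) (k : ℕ) :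
    ((Tsel M N σ α ε k).card : ℝ) *
      Real.exp (q * (α * Lk σ k) - |q| * (ε * Lk σ k)) ≤ Ssum M N σ q k := by
  have hterm : ∀ ω ∈ Tsel M N σ α ε k,
      Real.exp (q * (α * Lk σ k) - |q| * (ε * Lk σ k)) ≤ mnorm (AprodW M N σ ω) ^ q := by
    intro ω hω
    rw [Tsel, Finset.mem_filter] at hω
    obtain ⟨hω1, hω2⟩ := hω
    obtain ⟨n, hn1, hn2, _⟩ := mnorm_AprodW_nat M N hN σ hω1
    have hnpos : (0:ℝ) < mnorm (AprodW M N σ ω) := by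
      rw [hn2]; exact_mod_cast hn1
    rw [Real.rpow_def_of_pos hnpos]
    apply Real.exp_le_exp.mpr
    set t : ℝ := Real.log (mnorm (AprodW M N σ ω)) - α * Lk σ k with ht
    have h1 : Real.log (mnorm (AprodW M N σ ω)) * q = q * (α * Lk σ k) + q * t := by
      rw [ht]; ring
    rw [h1]
    have h2 : -(|q| * (ε * Lk σ k)) ≤ q * t := by
      have h3 : |q * t| ≤ |q| * (ε * Lk σ k) := by
        rw [abs_mul]
        exact mul_le_mul_of_nonneg_left hω2 (abs_nonneg q)
      have := neg_abs_le (q * t)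
      linarith
    linarith
  calc ((Tsel M N σ α ε k).card : ℝ) *
        Real.exp (q * (α * Lk σ k) - |q| * (ε * Lk σ k))
      = ∑ _ω ∈ Tsel M N σ α ε k,
          Real.exp (q * (α * Lk σ k) - |q| * (ε * Lk σ k)) := by
        rw [Finset.sum_const, nsmul_eq_mul]
    _ ≤ ∑ ω ∈ Tsel M N σ α ε k, mnorm (AprodW M N σ ω) ^ q :=
        Finset.sum_le_sum hterm
    _ ≤ Ssum M N σ q k := by
        refine Finset.sum_le_sum_of_subset_of_nonneg (Finset.filter_subset _ _)
          fun ω hω _ => ?_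
        obtain ⟨n, hn1, hn2, _⟩ := mnorm_AprodW_nat M N hN σ hω
        rw [hn2]
        exact Real.rpow_nonneg (Nat.cast_nonneg n) q

lemma Tcard_eventually (M N : ℕ) (hN : 1 ≤ N) (σ : ℕ → Bool) (q α ε : ℝ) (hε : 0 < ε) :
    ∀ᶠ k in atTop, ((Tsel M N σ α ε k).card : ℝ) ≤
      Real.exp ((PA M N σ q + ε) * k - q * (α * Lk σ k) + |q| * (ε * Lk σ k)) := by
  filter_upwards [Ssum_eventually_le M N hN σ q ε hε] with k hS
  have hm := markov M N hN σ q α ε k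
  have hepos : 0 < Real.exp (q * (α * Lk σ k) - |q| * (ε * Lk σ k)) := Real.exp_pos _
  rw [← le_div_iff₀ hepos] at hm
  calc ((Tsel M N σ α ε k).card : ℝ)
      ≤ Ssum M N σ q k / Real.exp (q * (α * Lk σ k) - |q| * (ε * Lk σ k)) := hm
    _ ≤ Real.exp ((PA M N σ q + ε) * k) /
          Real.exp (q * (α * Lk σ k) - |q| * (ε * Lk σ k)) := by
        gcongr
    _ = Real.exp ((PA M N σ q + ε) * k - q * (α * Lk σ k) + |q| * (ε * Lk σ k)) := by
        rw [← Real.exp_sub]; ring_nf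

/-- Summability of the digit series. -/
lemma summable_digits (σ : ℕ → Bool) (ξ : ℕ → ℕ) (hξ : ∀ i, ξ i ≤ capB (σ i)) :
    Summable (fun i => (ξ i : ℝ) / sc σ (i + 1)) := by
  refine Summable.of_nonneg_of_le
    (fun i => div_nonneg (Nat.cast_nonneg _) (le_of_lt (sc_pos σ _))) (fun i => ?_)
    (summable_geometric_of_lt_one (r := 1/3) (by norm_num) (by norm_num))
  have h1 : (ξ i : ℝ) ≤ 3 := by
    have := hξ i
    have : ξ i ≤ 3 := le_trans this (by cases σ i <;> simp [capB])
    exact_mod_cast this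
  have h2 : (3:ℝ)^(i+1) ≤ sc σ (i+1) := sc_ge_pow σ (i+1)
  have h3 : (0:ℝ) < sc σ (i+1) := sc_pos σ (i+1)
  rw [div_le_iff₀ h3]
  have : ((1:ℝ)/3)^i * sc σ (i+1) ≥ (1/3)^i * 3^(i+1) := by
    exact mul_le_mul_of_nonneg_left h2 (by positivity)
  have heq : ((1:ℝ)/3)^i * 3^(i+1) = 3 := by
    rw [pow_succ, div_pow, one_pow, ← mul_assoc]
    field_simp
  linarith

lemma tail_le (σ : ℕ → Bool) (ξ : ℕ → ℕ) (hξ : ∀ i, ξ i ≤ capB (σ i)) (k : ℕ) :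
    ∑' i : ℕ, (ξ (i + k) : ℝ) / sc σ (i + k + 1) ≤ 3 / (2 * sc σ k) := by
  have hsum : Summable (fun i => (ξ (i + k) : ℝ) / sc σ (i + k + 1)) := by
    have := (summable_digits σ ξ hξ)
    exact (summable_nat_add_iff k).mpr this
  have hterm : ∀ i : ℕ, (ξ (i + k) : ℝ) / sc σ (i + k + 1) ≤
      (1 / sc σ k) * (1/3)^i := by
    intro i
    have h1 : (ξ (i+k) : ℝ) ≤ 3 := by
      have := hξ (i+k)
      have : ξ (i+k) ≤ 3 := le_trans this (by cases σ (i+k) <;> simp [capB])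
      exact_mod_cast this
    have h2 : sc σ k * 3^(i+1) ≤ sc σ (i + k + 1) := by
      have := sc_mul_le σ k (i+1)
      have heq : k + (i+1) = i + k + 1 := by omega
      rwa [heq] at this
    have h3 : (0:ℝ) < sc σ (i+k+1) := sc_pos σ _
    have h4 : (0:ℝ) < sc σ k := sc_pos σ k
    have h5 : (0:ℝ) < (3:ℝ)^(i+1) := by positivity
    rw [div_le_iff₀ h3]
    have hgoal : (1 / sc σ k) * (1/3)^i * (sc σ k * 3^(i+1)) = 3 := by
      rw [show (1 / sc σ k) * (1/3)^i * (sc σ k * 3^(i+1)) =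
          (sc σ k / sc σ k) * (((1:ℝ)/3)^i * 3^i) * 3 by ring, div_self h4.ne', ← mul_pow]
      norm_num
    calc (ξ (i+k) : ℝ) ≤ 3 := h1
      _ = (1 / sc σ k) * (1/3)^i * (sc σ k * 3^(i+1)) := hgoal.symm
      _ ≤ (1 / sc σ k) * (1/3)^i * sc σ (i+k+1) := by
          refine mul_le_mul_of_nonneg_left h2 (by positivity)
  calc ∑' i : ℕ, (ξ (i + k) : ℝ) / sc σ (i + k + 1)
      ≤ ∑' i : ℕ, (1 / sc σ k) * (1/3)^i := by
        refine Summable.tsum_le_tsum hterm hsum ?_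
        exact (summable_geometric_of_lt_one (by norm_num) (by norm_num)).mul_left _
    _ = (1 / sc σ k) * (3/2) := by
        rw [tsum_mul_left, tsum_geometric_of_lt_one (by norm_num) (by norm_num)]
        norm_num
    _ = 3 / (2 * sc σ k) := by
        field_simp

/-- The base point of the cylinder of a finite word. -/
noncomputable def x0 (M N : ℕ) (σ : ℕ → Bool) (κ : ℕ) {k : ℕ} (ω : Fin k → ℕ) : ℝ :=
  (-(M : ℝ) - 1 + (κ : ℝ)) / (N : ℝ) + 1 / (N : ℝ) * ∑ i : Fin k, (ω i : ℝ) / sc σ (i.1 + 1)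

lemma mem_cyl (M N : ℕ) (hN : 1 ≤ N) (σ : ℕ → Bool) (κ : ℕ) (ξ : ℕ → ℕ)
    (hξ : ∀ i, ξ i ≤ capB (σ i)) (k : ℕ) :
    ((-(M : ℝ) - 1 + (κ : ℝ)) / (N : ℝ) +
        1 / (N : ℝ) * ∑' i : ℕ, (ξ i : ℝ) / sc σ (i + 1)) ∈
      Set.Icc (x0 M N σ κ (fun i : Fin k => ξ i))
        (x0 M N σ κ (fun i : Fin k => ξ i) + 2 / ((N : ℝ) * sc σ k)) := by
  have hsf := summable_digits σ ξ hξ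
  have hsplit := Summable.sum_add_tsum_nat_add (f := fun i => (ξ i : ℝ) / sc σ (i + 1)) k hsf
  have hfin : ∑ i : Fin k, ((fun i : Fin k => ξ i) i : ℝ) / sc σ (i.1 + 1) =
      ∑ i ∈ Finset.range k, (ξ i : ℝ) / sc σ (i + 1) := by
    exact Fin.sum_univ_eq_sum_range (fun i => (ξ i : ℝ) / sc σ (i + 1)) k
  have htail0 : 0 ≤ ∑' i : ℕ, (ξ (i + k) : ℝ) / sc σ (i + k + 1) :=
    tsum_nonneg fun i => div_nonneg (Nat.cast_nonneg _) (le_of_lt (sc_pos σ _))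
  have htail1 := tail_le σ ξ hξ k
  have hNpos : (0:ℝ) < N := by exact_mod_cast hN
  have hscpos := sc_pos σ k
  constructor
  · unfold x0
    rw [hfin]
    have : ∑ i ∈ Finset.range k, (ξ i : ℝ) / sc σ (i + 1) ≤
        ∑' i : ℕ, (ξ i : ℝ) / sc σ (i + 1) := by
      rw [← hsplit]; linarith
    have h1N : (0:ℝ) < 1 / (N:ℝ) := by positivity
    nlinarith
  · unfold x0
    rw [hfin]
    have hA : ∑' i : ℕ, (ξ i : ℝ) / sc σ (i + 1) =
        ∑ i ∈ Finset.range k, (ξ i : ℝ) / sc σ (i + 1) +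
          ∑' i : ℕ, (ξ (i + k) : ℝ) / sc σ (i + k + 1) := by rw [← hsplit]
    rw [hA]
    have hbound : 1 / (N:ℝ) * (3 / (2 * sc σ k)) ≤ 2 / ((N:ℝ) * sc σ k) := by
      have h2 : (0:ℝ) < (N:ℝ) * sc σ k := mul_pos hNpos hscpos
      rw [div_mul_div_comm, div_le_div_iff₀ (by nlinarith) h2]
      nlinarith
    have h1N : (0:ℝ) ≤ 1 / (N:ℝ) := by positivity
    nlinarith [mul_le_mul_of_nonneg_left htail1 h1N]

end AuxE
section AuxF

open Filter MeasureTheory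
open scoped ENNReal NNReal

lemma Aprod_congr (M N : ℕ) (σ : ℕ → Bool) (ξ ξ' : ℕ → ℕ) (k : ℕ)
    (h : ∀ i < k, ξ i = ξ' i) : Aprod M N σ ξ k = Aprod M N σ ξ' k := by
  unfold Aprod
  congr 1
  refine List.map_congr_left fun i hi => ?_
  rw [h i (List.mem_range.mp hi)]

/-- Uniform (level-K) version of the level set. -/
def EsetK (M N : ℕ) (σ : ℕ → Bool) (α ε : ℝ) (K : ℕ) : Set ℝ :=
  {a | ∃ κ : ℕ, (1 ≤ κ ∧ κ ≤ N + M) ∧ ∃ ξ : ℕ → ℕ, (∀ i, ξ i ≤ capB (σ i)) ∧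
    a = (-(M : ℝ) - 1 + (κ : ℝ)) / (N : ℝ) +
        1 / (N : ℝ) * ∑' i : ℕ, (ξ i : ℝ) / sc σ (i + 1) ∧
    ∀ k, K ≤ k → |Real.log (mnorm (Aprod M N σ ξ k)) - α * Lk σ k| ≤ ε * Lk σ k}

lemma Eset_subset_iUnion (M N : ℕ) (σ : ℕ → Bool) (α ε : ℝ) (hε : 0 < ε) :
    Eset M N σ α ⊆ ⋃ K : ℕ, EsetK M N σ α ε K := by
  intro a ha
  obtain ⟨hJ, hirr, κ, hκ, ξ, hξb, hsum, htend⟩ := ha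
  have h1 : ∀ᶠ k : ℕ in atTop, |Real.log (mnorm (Aprod M N σ ξ k)) /
      ((cnt σ false k : ℝ) * Real.log 3 + (cnt σ true k : ℝ) * Real.log 4) - α| ≤ ε := by
    obtain ⟨K, hK⟩ := Metric.tendsto_atTop.mp htend ε hε
    refine eventually_atTop.mpr ⟨K, fun k hk => ?_⟩
    have := hK k hk
    rw [Real.dist_eq] at this
    exact le_of_lt this
  obtain ⟨K, hK⟩ := eventually_atTop.mp h1
  refine Set.mem_iUnion.mpr ⟨max K 1, κ, hκ, ξ, hξb, hsum, ?_⟩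
  intro k hk
  have hk1 : 1 ≤ k := le_trans (le_max_right K 1) hk
  have hkK : K ≤ k := le_trans (le_max_left K 1) hk
  have hL := Lk_pos σ hk1
  have hq := hK k hkK
  have hLk : ((cnt σ false k : ℝ) * Real.log 3 + (cnt σ true k : ℝ) * Real.log 4) =
      Lk σ k := rfl
  rw [hLk] at hq
  have hrw : Real.log (mnorm (Aprod M N σ ξ k)) - α * Lk σ k =
      (Real.log (mnorm (Aprod M N σ ξ k)) / Lk σ k - α) * Lk σ k := by
    field_simp
  rw [hrw, abs_mul, abs_of_pos hL]
  exact mul_le_mul_of_nonneg_right hq (le_of_lt hL)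

lemma dimH_EsetK_le (M N : ℕ) (hN : 1 ≤ N) (σ : ℕ → Bool) (α ε q s : ℝ)
    (hε : 0 < ε) (hs : 0 < s) (K : ℕ)
    (hg : Tendsto (fun k : ℕ => (PA M N σ q + ε) * k - q * (α * Lk σ k) +
      |q| * (ε * Lk σ k) - s * Lk σ k) atTop atBot) :
    dimH (EsetK M N σ α ε K) ≤ ENNReal.ofReal s := by
  classical
  have hNpos : (0:ℝ) < N := by exact_mod_cast hN
  set δ : ℕ → ℝ := fun k => 2 / ((N:ℝ) * sc σ k) with hδ
  have hδpos : ∀ k, 0 < δ k := fun k => by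
    have := sc_pos σ k
    rw [hδ]
    positivity
  set t : ∀ k : ℕ, (↥(Finset.Icc 1 (N+M)) × ↥(wordsF σ k)) → Set ℝ :=
    fun k i => if i.2.1 ∈ Tsel M N σ α ε k then
      Set.Icc (x0 M N σ i.1.1 i.2.1) (x0 M N σ i.1.1 i.2.1 + δ k) else ∅ with htdef
  -- the Hausdorff measure bound via covers
  have hμ : μH[s] (EsetK M N σ α ε K) ≤
      liminf (fun k => ∑ i, EMetric.diam (t k i) ^ s) atTop := by
    refine MeasureTheory.Measure.hausdorffMeasure_le_liminf_sum s _ (fun k => ENNReal.ofReal (δ k)) ?_ t ?_ ?_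
    · -- r → 0
      have h0 : Tendsto δ atTop (nhds 0) := by
        refine squeeze_zero (g := fun k => 2 * (1/3:ℝ)^k) (fun k => (hδpos k).le) (fun k => ?_) ?_
        · have h1 : (3:ℝ)^k ≤ sc σ k := sc_ge_pow σ k
          have h2 : (0:ℝ) < sc σ k := sc_pos σ k
          have h3 : (0:ℝ) < (3:ℝ)^k := by positivity
          have hN1 : (1:ℝ) ≤ (N:ℝ) := by exact_mod_cast hN
          rw [hδ]
          have : 2 / ((N:ℝ) * sc σ k) ≤ 2 / sc σ k := by
            apply div_le_div_of_nonneg_left (by norm_num) h2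
            nlinarith
          refine le_trans this ?_
          rw [div_le_iff₀ h2]
          have : (2:ℝ) * (1/3)^k * 3^k = 2 := by
            rw [div_pow, one_pow, mul_assoc]
            field_simp
          nlinarith
        · have := tendsto_pow_atTop_nhds_zero_of_lt_one
            (show (0:ℝ) ≤ 1/3 by norm_num) (show (1/3:ℝ) < 1 by norm_num)
          have h2 := this.const_mul (2:ℝ)
          simpa using h2
      have := (ENNReal.continuous_ofReal.tendsto 0).comp h0
      simpa [Function.comp_def] using this
    · -- diameters
      refine Eventually.of_forall fun k => fun i => ?_
      rw [htdef]
      by_cases h : i.2.1 ∈ Tsel M N σ α ε k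
      · simp only [h, if_true]
        rw [Real.ediam_Icc]
        apply ENNReal.ofReal_le_ofReal
        ring_nf
        exact le_refl _
      · simp only [h, if_false]
        rw [EMetric.diam_empty]
        exact zero_le
    · -- coverage
      refine eventually_atTop.mpr ⟨K, fun k hk => ?_⟩
      intro a ha
      obtain ⟨κ, hκ, ξ, hξb, hsum, hcl⟩ := ha
      have hmemW : (fun i : Fin k => ξ i.1) ∈ wordsF σ k := by
        refine Fintype.mem_piFinset.mpr fun i => ?_
        rw [Finset.mem_range, Nat.lt_succ_iff]
        exact hξb i.1
      have hκmem : κ ∈ Finset.Icc 1 (N+M) := Finset.mem_Icc.mpr hκ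
      have hTsel : (fun i : Fin k => ξ i.1) ∈ Tsel M N σ α ε k := by
        rw [Tsel, Finset.mem_filter]
        refine ⟨hmemW, ?_⟩
        have hAeq : AprodW M N σ (fun i : Fin k => ξ i.1) = Aprod M N σ ξ k := by
          rw [AprodW_eq_Aprod]
          refine Aprod_congr M N σ _ ξ k fun i hi => ?_
          simp [padW, hi]
        rw [hAeq]
        exact hcl k hk
      refine Set.mem_iUnion.mpr ⟨(⟨κ, hκmem⟩, ⟨(fun i : Fin k => ξ i.1), hmemW⟩), ?_⟩
      rw [htdef]
      simp only [hTsel, if_true]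
      rw [hsum]
      exact mem_cyl M N hN σ κ ξ hξb k
  -- compute the sums
  have hsum_eq : ∀ k, (∑ i, EMetric.diam (t k i) ^ s) =
      (((Finset.Icc 1 (N+M)).card : ℝ≥0∞)) * (((Tsel M N σ α ε k).card : ℝ≥0∞)) *
        ENNReal.ofReal (δ k) ^ s := by
    intro k
    rw [Fintype.sum_prod_type]
    have hinner : ∀ κ : ↥(Finset.Icc 1 (N+M)),
        (∑ ω : ↥(wordsF σ k), EMetric.diam (t k (κ, ω)) ^ s) =
          (((Tsel M N σ α ε k).card : ℝ≥0∞)) * ENNReal.ofReal (δ k) ^ s := by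
      intro κ
      have hterm : ∀ ω : ↥(wordsF σ k), EMetric.diam (t k (κ, ω)) ^ s =
          if ω.1 ∈ Tsel M N σ α ε k then ENNReal.ofReal (δ k) ^ s else 0 := by
        intro ω
        rw [htdef]
        by_cases h : ω.1 ∈ Tsel M N σ α ε k
        · simp only [h, if_true]
          unfold EMetric.diam
          rw [Real.ediam_Icc]
          congr 1
          ring_nf
        · simp only [h, if_false]
          unfold EMetric.diam
          rw [EMetric.diam_empty, ENNReal.zero_rpow_of_pos hs]
      rw [Finset.sum_congr rfl (fun ω _ => hterm ω)]
      rw [Finset.sum_coe_sort (wordsF σ k)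
        (fun ω => if ω ∈ Tsel M N σ α ε k then ENNReal.ofReal (δ k) ^ s else 0)]
      rw [Finset.sum_ite_mem]
      have hint : wordsF σ k ∩ Tsel M N σ α ε k = Tsel M N σ α ε k :=
        Finset.inter_eq_right.mpr (Finset.filter_subset _ _)
      rw [hint, Finset.sum_const, nsmul_eq_mul]
    rw [Finset.sum_congr rfl (fun κ _ => hinner κ)]
    rw [Finset.sum_const, nsmul_eq_mul, Finset.card_univ, Fintype.card_coe]
    ring
  -- bound by a real sequence tending to 0
  set g : ℕ → ℝ := fun k => (PA M N σ q + ε) * k - q * (α * Lk σ k) +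
      |q| * (ε * Lk σ k) - s * Lk σ k with hgdef
  set bfun : ℕ → ℝ := fun k => ((N:ℝ) + M) * Real.exp (s * Real.log 2) * Real.exp (g k)
    with hbdef
  have hb0 : Tendsto bfun atTop (nhds 0) := by
    have h1 : Tendsto (fun k => Real.exp (g k)) atTop (nhds 0) :=
      Real.tendsto_exp_atBot.comp hg
    have h2 := h1.const_mul (((N:ℝ) + M) * Real.exp (s * Real.log 2))
    simp only [mul_zero] at h2
    refine h2.congr fun k => ?_
    rw [hbdef]
  have hev : ∀ᶠ k in atTop, (∑ i, EMetric.diam (t k i) ^ s) ≤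
      ENNReal.ofReal (bfun k) := by
    filter_upwards [Tcard_eventually M N hN σ q α ε hε] with k hT
    rw [hsum_eq k]
    have hIcc : ((Finset.Icc 1 (N+M)).card : ℝ≥0∞) = ENNReal.ofReal ((N:ℝ) + M) := by
      rw [Nat.card_Icc]
      simp only [Nat.add_sub_cancel]
      rw [← ENNReal.ofReal_natCast]
      congr 1
      push_cast
      ring
    have hTc : ((Tsel M N σ α ε k).card : ℝ≥0∞) =
        ENNReal.ofReal ((Tsel M N σ α ε k).card : ℝ) := by
      rw [← ENNReal.ofReal_natCast]
    have hδs : ENNReal.ofReal (δ k) ^ s = ENNReal.ofReal (δ k ^ s) :=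
      ENNReal.ofReal_rpow_of_pos (hδpos k)
    have hNM0' : (0:ℝ) ≤ (N:ℝ) + M := by positivity
    have hmul0 : (0:ℝ) ≤ ((N:ℝ) + M) * ((Tsel M N σ α ε k).card : ℝ) :=
      mul_nonneg hNM0' (Nat.cast_nonneg _)
    rw [hIcc, hTc, hδs, ← ENNReal.ofReal_mul hNM0', ← ENNReal.ofReal_mul hmul0]
    apply ENNReal.ofReal_le_ofReal
    -- real inequality
    have hδs_le : δ k ^ s ≤ Real.exp (s * Real.log 2 - s * Lk σ k) := by
      rw [Real.rpow_def_of_pos (hδpos k)]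
      apply Real.exp_le_exp.mpr
      have hlogδ : Real.log (δ k) = Real.log 2 - (Real.log (N:ℝ) + Lk σ k) := by
        rw [hδ]
        rw [Real.log_div (by norm_num) (ne_of_gt (mul_pos hNpos (sc_pos σ k)))]
        rw [Real.log_mul (ne_of_gt hNpos) (ne_of_gt (sc_pos σ k))]
        rw [log_sc]
      rw [hlogδ]
      have hlogN : 0 ≤ Real.log (N:ℝ) :=
        Real.log_nonneg (by exact_mod_cast hN)
      nlinarith
    have hTcard0 : (0:ℝ) ≤ ((Tsel M N σ α ε k).card : ℝ) := Nat.cast_nonneg _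
    have hNM0 : (0:ℝ) ≤ (N:ℝ) + M := by positivity
    calc ((N:ℝ) + M) * ((Tsel M N σ α ε k).card : ℝ) * δ k ^ s
        ≤ ((N:ℝ) + M) * Real.exp ((PA M N σ q + ε) * k - q * (α * Lk σ k) +
            |q| * (ε * Lk σ k)) * Real.exp (s * Real.log 2 - s * Lk σ k) := by
          have h1 : (0:ℝ) ≤ δ k ^ s := (Real.rpow_pos_of_pos (hδpos k) s).le
          apply mul_le_mul
          · exact mul_le_mul_of_nonneg_left hT hNM0
          · exact hδs_le
          · exact h1
          · positivity
      _ = bfun k := by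
          simp only [hbdef, hgdef]
          rw [mul_assoc, ← Real.exp_add, mul_assoc, ← Real.exp_add]
          congr 2
          ring
  have hliminf : liminf (fun k => ∑ i, EMetric.diam (t k i) ^ s) atTop = 0 := by
    have h1 : liminf (fun k => ∑ i, EMetric.diam (t k i) ^ s) atTop ≤
        liminf (fun k => ENNReal.ofReal (bfun k)) atTop := liminf_le_liminf hev
    have h2 : Tendsto (fun k => ENNReal.ofReal (bfun k)) atTop (nhds 0) := by
      have := (ENNReal.continuous_ofReal.tendsto 0).comp hb0
      simpa [Function.comp_def] using this
    rw [h2.liminf_eq] at h1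
    exact le_antisymm h1 zero_le
  have hμ0 : μH[s] (EsetK M N σ α ε K) = 0 := by
    rw [hliminf] at hμ
    exact le_antisymm hμ zero_le
  have hsnn : ((s.toNNReal : ℝ)) = s := Real.coe_toNNReal s hs.le
  have := dimH_le_of_hausdorffMeasure_ne_top (d := s.toNNReal)
    (s := EsetK M N σ α ε K) (by rw [hsnn, hμ0]; exact ENNReal.zero_ne_top)
  rwa [show ((s.toNNReal : ℝ≥0∞)) = ENNReal.ofReal s from rfl] at this

end AuxF
section AuxG

open Filter

lemma dimH_Eset_le_q (M N : ℕ) (hN : 1 ≤ N) (σ : ℕ → Bool) (α : ℝ) (c : ℝ)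
    (hc : Tendsto (fun k : ℕ => Lk σ k / (k:ℝ)) atTop (nhds c)) (hc0 : 0 < c)
    (q s : ℝ) (hs0 : 0 < s) (hfs : -q * α + PA M N σ q / c < s) :
    dimH (Eset M N σ α) ≤ ENNReal.ofReal s := by
  set F : ℝ := -q * α + PA M N σ q / c with hF
  set ε : ℝ := c * (s - F) / (2 * (1 + |q| * c)) with hεdef
  have hq0 : 0 ≤ |q| := abs_nonneg q
  have hden : 0 < 1 + |q| * c := by nlinarith
  have hε : 0 < ε := by
    rw [hεdef]
    have h1 : 0 < s - F := by linarith
    positivity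
  have hg : Tendsto (fun k : ℕ => (PA M N σ q + ε) * k - q * (α * Lk σ k) +
      |q| * (ε * Lk σ k) - s * Lk σ k) atTop atBot := by
    set θ : ℝ := -(q * α) + |q| * ε - s with hθ
    set G : ℝ := (PA M N σ q + ε) + θ * c with hG
    have hGneg : G < 0 := by
      have h1 : c * F = -(q * α) * c + PA M N σ q := by
        rw [hF]; field_simp
      have h2 : ε * (2 * (1 + |q| * c)) = c * (s - F) := by
        rw [hεdef]; field_simp
      rw [hG, hθ]
      nlinarith
    have hratio : Tendsto (fun k : ℕ => (PA M N σ q + ε) + θ * (Lk σ k / k)) atTop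
        (nhds G) := by
      rw [hG]
      exact tendsto_const_nhds.add (hc.const_mul θ)
    have heventual : ∀ᶠ k : ℕ in atTop, (PA M N σ q + ε) * k - q * (α * Lk σ k) +
        |q| * (ε * Lk σ k) - s * Lk σ k ≤ (G/2) * k := by
      have hev1 : ∀ᶠ k : ℕ in atTop,
          (PA M N σ q + ε) + θ * (Lk σ k / k) ≤ G/2 :=
        hratio.eventually_le_const (by linarith)
      filter_upwards [hev1, eventually_ge_atTop 1] with k hk hk1
      have hkpos : (0:ℝ) < k := by exact_mod_cast hk1
      have hexp : (PA M N σ q + ε) * k - q * (α * Lk σ k) +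
          |q| * (ε * Lk σ k) - s * Lk σ k =
          ((PA M N σ q + ε) + θ * (Lk σ k / k)) * k := by
        rw [hθ]; field_simp; ring
      rw [hexp]
      exact mul_le_mul_of_nonneg_right hk hkpos.le
    refine tendsto_atBot_mono' atTop heventual ?_
    exact (tendsto_const_mul_atBot_of_neg (by linarith)).mpr tendsto_natCast_atTop_atTop
  calc dimH (Eset M N σ α) ≤ dimH (⋃ K : ℕ, EsetK M N σ α ε K) :=
        dimH_mono (Eset_subset_iUnion M N σ α ε hε)
    _ = ⨆ K : ℕ, dimH (EsetK M N σ α ε K) := dimH_iUnion _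
    _ ≤ ENNReal.ofReal s := iSup_le fun K => dimH_EsetK_le M N hN σ α ε q s hε hs0 K hg

end AuxG
/-- multifractal upper bound for dim_H E(α). -/
theorem stmt18 (σ : ℕ → Bool) (M N : ℕ) (hN : 1 ≤ N) (hMN : Nat.Coprime M N)
    (n₀ n₁ : ℝ)
    (h0 : Tendsto (fun k : ℕ => (cnt σ false k : ℝ) / (k : ℝ)) atTop (nhds n₀))
    (h1 : Tendsto (fun k : ℕ => (cnt σ true k : ℝ) / (k : ℝ)) atTop (nhds n₁))
    (α : ℝ) (hne : (Eset M N σ α).Nonempty) :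
    dimH (Eset M N σ α) ≤
      ENNReal.ofReal (⨅ q : ℝ,
        (-q * α + PA M N σ q / (n₀ * Real.log 3 + n₁ * Real.log 4))) := by
  set c : ℝ := n₀ * Real.log 3 + n₁ * Real.log 4 with hcdef
  have hc : Tendsto (fun k : ℕ => Lk σ k / (k:ℝ)) atTop (nhds c) := by
    have heq : (fun k : ℕ => Lk σ k / (k:ℝ)) =
        fun k : ℕ => ((cnt σ false k : ℝ) / k) * Real.log 3 +
          ((cnt σ true k : ℝ) / k) * Real.log 4 := by
      funext k; unfold Lk; ring
    rw [heq, hcdef]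
    exact (h0.mul_const _).add (h1.mul_const _)
  have hn0 : 0 ≤ n₀ := ge_of_tendsto' h0 fun k => by positivity
  have hn1 : 0 ≤ n₁ := ge_of_tendsto' h1 fun k => by positivity
  have hsum01 : n₀ + n₁ = 1 := by
    have hadd := h0.add h1
    have heq : ∀ᶠ k : ℕ in atTop,
        ((cnt σ false k : ℝ) / k + (cnt σ true k : ℝ) / k) = 1 := by
      filter_upwards [eventually_ge_atTop 1] with k hk
      have hkpos : (0:ℝ) < k := by exact_mod_cast hk
      rw [← add_div]
      rw [show ((cnt σ false k : ℝ) + (cnt σ true k : ℝ)) = (k:ℝ) by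
        exact_mod_cast congrArg (Nat.cast : ℕ → ℝ) (cnt_add σ k)]
      field_simp
    have h1' : Tendsto (fun _ : ℕ => (1:ℝ)) atTop (nhds (n₀ + n₁)) :=
      Tendsto.congr' heq hadd
    exact tendsto_nhds_unique h1' tendsto_const_nhds
  have hc0 : 0 < c := by
    rw [hcdef]
    nlinarith [log3_pos, log3_le_log4]
  set I : ℝ := ⨅ q : ℝ, (-q * α + PA M N σ q / c) with hI
  have key : ∀ η : ℝ, 0 < η →
      dimH (Eset M N σ α) ≤ ENNReal.ofReal (max I 0 + η) := by
    intro η hη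
    have hIlt : I < max I 0 + η :=
      lt_of_le_of_lt (le_max_left _ _) (lt_add_of_pos_right _ hη)
    obtain ⟨q, hq⟩ := exists_lt_of_ciInf_lt hIlt
    have hmax0 : (0:ℝ) ≤ max I 0 := le_max_right _ _
    exact dimH_Eset_le_q M N hN σ α c hc hc0 q (max I 0 + η) (by linarith) hq
  have htend : Tendsto (fun η : ℝ => ENNReal.ofReal (max I 0 + η))
      (nhdsWithin 0 (Set.Ioi 0)) (nhds (ENNReal.ofReal (max I 0))) := by
    have h1' : Tendsto (fun η : ℝ => max I 0 + η) (nhdsWithin 0 (Set.Ioi 0))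
        (nhds (max I 0)) := by
      have h2' : Tendsto (fun η : ℝ => max I 0 + η) (nhds 0) (nhds (max I 0 + 0)) :=
        (continuous_const.add continuous_id).tendsto 0
      rw [add_zero] at h2'
      exact h2'.mono_left nhdsWithin_le_nhds
    exact (ENNReal.continuous_ofReal.tendsto _).comp h1'
  have hfinal : dimH (Eset M N σ α) ≤ ENNReal.ofReal (max I 0) := by
    refine ge_of_tendsto htend ?_
    filter_upwards [self_mem_nhdsWithin] with η hη
    exact key η hη
  have hmaxI : ENNReal.ofReal (max I 0) = ENNReal.ofReal I := by
    rcases le_total I 0 with h | h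
    · rw [max_eq_right h]
      rw [ENNReal.ofReal_eq_zero.mpr le_rfl, eq_comm, ENNReal.ofReal_eq_zero]
      exact h
    · rw [max_eq_left h]
  rw [hmaxI] at hfinal
  exact hfinal
end
end
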